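/- arXiv:2203.06353 — 8 statements merged into one kernel-verified Lean document; each statement's English description precedes it below -/
import Mathlib

section
/- A lottery p is ex-ante efficient if and only if there exists a utilitarian representation (u_i)_{i∈N} of the agents' preferences such that p is supported on outcomes of maximal welfare; that is, every x with p(x) > 0 satisfies ∑_{i∈N} u_i(x) = max_{y∈X} ∑_{i∈N} u_i(y). -/
attribute [local instance] Classical.propDecidable

/-- The strict part of a preference relation. -/
def strictPref {X : Type*} (r : X → X → Prop) (x y : X) : Prop := r x y ∧ ¬ r y x

/-- A preference: a complete (total) and transitive binary relation. -/
def IsPrefOrder {X : Type*} (r : X → X → Prop) : Prop :=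
  (∀ x y, r x y ∨ r y x) ∧ Transitive r

/-- A lottery over the finite set of outcomes `X`. -/
def IsLottery {X : Type*} [Fintype X] (p : X → ℝ) : Prop :=
  (∀ x, 0 ≤ p x) ∧ ∑ x, p x = 1

/-- Total weight a lottery `p` places on outcomes strictly preferred to `x`. -/
noncomputable def upWeight {X : Type*} [Fintype X] (r : X → X → Prop) (p : X → ℝ) (x : X) : ℝ :=
  ∑ y ∈ Finset.univ.filter (fun y => strictPref r y x), p y

/-- First-order stochastic dominance (weak): `p ≿ q`. -/
def SDge {X : Type*} [Fintype X] (r : X → X → Prop) (p q : X → ℝ) : Prop :=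
  ∀ x, upWeight r q x ≤ upWeight r p x

/-- First-order stochastic dominance (strict): `p ≻ q`. -/
def SDgt {X : Type*} [Fintype X] (r : X → X → Prop) (p q : X → ℝ) : Prop :=
  SDge r p q ∧ ∃ x, upWeight r q x < upWeight r p x

/-- A lottery `p` is ex-ante efficient if no lottery weakly SD-dominates it for all agents
and strictly for some agent. -/
def ExAnteEff {X N : Type*} [Fintype X] (pref : N → X → X → Prop) (p : X → ℝ) : Prop :=
  ¬ ∃ q : X → ℝ, IsLottery q ∧ (∀ i, SDge (pref i) q p) ∧ ∃ j, SDgt (pref j) q p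

/-- An outcome is Pareto optimal if no outcome is weakly better for all agents and
strictly better for some agent. -/
def ParetoOptimal {X N : Type*} (pref : N → X → X → Prop) (x : X) : Prop :=
  ¬ ∃ y, (∀ i, pref i y x) ∧ ∃ j, strictPref (pref j) y x

/-- A lottery is ex-post efficient if it is supported on Pareto optimal outcomes. -/
def ExPostEff {X N : Type*} [Fintype X] (pref : N → X → X → Prop) (p : X → ℝ) : Prop :=
  ∀ x, 0 < p x → ParetoOptimal pref x

/-- `u` is a utility representation of the preference `r`. -/
def Represents {X : Type*} (u : X → ℝ) (r : X → X → Prop) : Prop :=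
  ∀ x y, (u y ≤ u x ↔ r x y)

/-!
If `p` is supported on welfare maximizers of a utilitarian representation, a lottery `q`
dominating `p` would have at least the expected utility of `p` for every agent, and strictly more
for one (first-order stochastic dominance raises expected utility: Abel summation over the
distinct utility levels), hence strictly more expected welfare than the maximum.

Conversely, moving mass from a support point `x` of `p` to an outcome `y` changes the weight
above threshold `z` for agent `i` by `a(y,x)(i,z)`. These vectors generate a finitely generated,
hence closed, cone, which efficiency keeps away from the standard simplex: a point of the simplex
in the cone is a direction in which a small step from `p` dominates `p`. Separating the two gives
weights `w(i,z) > 0` with `∑ w • a(y,x) ≤ 0`, and the utilities `u i y = ∑ z, w(i,z) [y ≻ᵢ z]`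
represent the preferences and make every support point of `p` welfare maximal.
-/

open Finset Filter Topology

theorem exists_sub_smul_nonneg_eq_zero {ι : Type*} [Fintype ι] {c μ : ι → ℝ} (hc : 0 ≤ c)
    (hμ : ∃ i, 0 < μ i) : ∃ t : ℝ, 0 ≤ c - t • μ ∧ ∃ i, (c - t • μ) i = 0 := by
  obtain ⟨i₀, hi₀, hmin⟩ := (univ.filter (0 < μ ·)).exists_min_image (fun i => c i / μ i)
    (by simpa [Finset.Nonempty] using hμ)
  replace hi₀ : 0 < μ i₀ := (mem_filter.1 hi₀).2
  refine ⟨c i₀ / μ i₀, fun i => ?_, i₀, by simp [hi₀.ne']⟩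
  simp only [Pi.zero_apply, Pi.sub_apply, Pi.smul_apply, smul_eq_mul, sub_nonneg]
  rcases lt_or_ge 0 (μ i) with hi | hi
  · simpa [le_div_iff₀ hi] using hmin i (by simp [hi])
  · exact (mul_nonpos_of_nonneg_of_nonpos (div_nonneg (hc i₀) hi₀.le) hi).trans (hc i)

namespace PointedCone

variable {E : Type*} [AddCommGroup E] [Module ℝ E]

theorem mem_hull_finset_iff {s : Finset E} {x : E} :
    x ∈ hull ℝ (s : Set E) ↔ ∃ c : s → ℝ, 0 ≤ c ∧ ∑ a, c a • (a : E) = x := by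
  rw [Submodule.mem_span_finset']
  constructor
  · rintro ⟨c, rfl⟩
    exact ⟨fun a => c a, fun a => (c a).2, rfl⟩
  · rintro ⟨c, hc, rfl⟩
    exact ⟨fun a => ⟨c a, hc a⟩, rfl⟩

theorem mem_hull_erase [DecidableEq E] {s : Finset E} (hs : ¬ LinearIndependent ℝ ((↑) : s → E))
    {x : E} (hx : x ∈ hull ℝ (s : Set E)) : ∃ a ∈ s, x ∈ hull ℝ (s.erase a : Set E) := by
  obtain ⟨c, hc, rfl⟩ := mem_hull_finset_iff.1 hx
  obtain ⟨μ, hμ, i, hi⟩ := Fintype.not_linearIndependent_iff.1 hs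
  have hpos : ∃ μ : s → ℝ, ∑ a, μ a • (a : E) = 0 ∧ ∃ i, 0 < μ i := by
    rcases hi.lt_or_gt with hi | hi
    · exact ⟨-μ, by simp only [Pi.neg_apply, neg_smul, sum_neg_distrib, hμ, neg_zero], i,
        by simpa using hi⟩
    · exact ⟨μ, hμ, i, hi⟩
  obtain ⟨μ, hμ, hpos⟩ := hpos
  obtain ⟨t, hnonneg, a₀, ha₀⟩ := exists_sub_smul_nonneg_eq_zero hc hpos
  have hsum : ∑ a, c a • (a : E) = ∑ a, (c - t • μ) a • (a : E) := by
    simp only [Pi.sub_apply, Pi.smul_apply, smul_eq_mul, sub_smul, mul_smul, sum_sub_distrib,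
      ← smul_sum, hμ, smul_zero, sub_zero]
  refine ⟨a₀, a₀.2, hsum ▸ Submodule.sum_mem _ fun a _ => ?_⟩
  by_cases h : a = a₀
  · rw [h, ha₀, zero_smul]
    exact zero_mem _
  · refine smul_mem _ (hnonneg a) (subset_hull ?_)
    exact mem_erase.2 ⟨fun h' => h (Subtype.ext h'), a.2⟩

variable [TopologicalSpace E] [IsTopologicalAddGroup E] [ContinuousSMul ℝ E] [T2Space E]

theorem isClosed_hull_finset (s : Finset E) : IsClosed (hull ℝ (s : Set E) : Set E) := by
  induction s using Finset.strongInduction with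
  | H s ih =>
  by_cases hs : LinearIndependent ℝ ((↑) : s → E)
  · have hT := LinearMap.isClosedEmbedding_of_injective (LinearMap.ker_eq_bot.2
      (linearIndependent_iff_injective_fintypeLinearCombination.1 hs))
    convert hT.isClosedMap _ (isClosed_Ici (a := (0 : s → ℝ)))
    ext x
    simp [mem_hull_finset_iff, Fintype.linearCombination_apply]
  · have : (hull ℝ (s : Set E) : Set E) = ⋃ a ∈ s, (hull ℝ (s.erase a : Set E) : Set E) := by
      refine subset_antisymm (fun x hx => by simpa using mem_hull_erase hs hx) ?_
      exact Set.iUnion₂_subset fun a _ => Submodule.span_mono (by simp)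
    rw [this]
    exact s.finite_toSet.isClosed_biUnion fun a ha => ih _ (erase_ssubset ha)

theorem isClosed_hull_of_finite {s : Set E} (hs : s.Finite) : IsClosed (hull ℝ s : Set E) := by
  lift s to Finset E using hs
  exact isClosed_hull_finset s

end PointedCone

section Preference

variable {X : Type*} {r : X → X → Prop}

theorem Represents.strictPref_iff {u : X → ℝ} (hu : Represents u r) {x z : X} :
    strictPref r x z ↔ u z < u x := by
  rw [strictPref, ← hu, ← hu, not_le, and_iff_right_of_imp le_of_lt]

theorem represents_sum_strictPref_indicator [Fintype X] (hr : IsPrefOrder r) {w : X → ℝ}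
    (hw : ∀ z, 0 < w z) :
    Represents (fun y => ∑ z, w z * if strictPref r y z then 1 else 0) r := by
  have mono : ∀ {x y}, r x y → ∀ z,
      w z * (if strictPref r y z then 1 else 0) ≤ w z * if strictPref r x z then 1 else 0 := by
    intro x y hxy z
    refine mul_le_mul_of_nonneg_left ?_ (hw z).le
    by_cases hy : strictPref r y z
    · have hx : strictPref r x z := ⟨hr.2 hxy hy.1, fun hzx => hy.2 (hr.2 hzx hxy)⟩
      simp [hx, hy]
    · split_ifs <;> norm_num
  intro x y
  refine ⟨fun hle => ?_, fun hxy => sum_le_sum fun z _ => mono hxy z⟩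
  by_contra hxy
  have hyx : strictPref r y x := ⟨(hr.1 x y).resolve_left hxy, hxy⟩
  refine hle.not_gt (sum_lt_sum (fun z _ => mono hyx.1 z) ⟨x, mem_univ x, ?_⟩)
  have hxx : ¬ strictPref r x x := fun h => h.2 h.1
  simpa only [if_pos hyx, if_neg hxx, mul_one, mul_zero] using hw x

end Preference

section AbelSummation

variable {X : Type*} [Fintype X]

theorem card_image_min_lt {u : X → ℝ} {z m : X} (h : u z < u m) :
    (univ.image fun x => min (u x) (u z)).card < (univ.image u).card := by
  refine card_lt_card ⟨fun t ht => ?_, fun hsub => ?_⟩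
  · obtain ⟨x, -, rfl⟩ := mem_image.1 ht
    rcases min_choice (u x) (u z) with h | h <;> simp [h]
  · obtain ⟨x, -, hx⟩ := mem_image.1 (hsub (mem_image_of_mem u (mem_univ m)))
    exact h.not_ge (hx ▸ min_le_right _ _)

theorem sum_filter_min_lt_min (u d : X → ℝ) (c : ℝ) (z : X) :
    ∑ x with min (u z) c < min (u x) c, d x = if u z < c then ∑ x with u z < u x, d x else 0 := by
  split_ifs with hz
  · congr 1; ext x; simp [hz, min_eq_left hz.le]
  · simp [not_lt.1 hz]

theorem sum_mul_nonneg_of_upperSums_nonneg {d : X → ℝ} (hd : ∑ x, d x = 0) (u : X → ℝ)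
    (h : ∀ z, 0 ≤ ∑ x with u z < u x, d x) :
    0 ≤ ∑ x, u x * d x ∧ ((∃ z, 0 < ∑ x with u z < u x, d x) → 0 < ∑ x, u x * d x) := by
  induction hn : (univ.image u).card using Nat.strong_induction_on generalizing u with
  | _ n ih =>
  by_cases hconst : ∀ z x, u x ≤ u z
  · have hU : ∀ z, ∑ x with u z < u x, d x = 0 := fun z => by
      simp [fun x => not_lt.2 (hconst z x)]
    have hsum : ∑ x, u x * d x = 0 := by
      rcases isEmpty_or_nonempty X with hX | ⟨⟨x₀⟩⟩
      · simp
      · simp [fun x => le_antisymm (hconst x₀ x) (hconst x x₀), ← mul_sum, hd]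
    simp [hU, hsum]
  push Not at hconst
  obtain ⟨z, x, hzx⟩ := hconst
  obtain ⟨m, -, hm⟩ := univ.exists_max_image u ⟨z, mem_univ z⟩
  -- `u z'` is the second largest value of `u`; truncating `u` there removes the top value
  obtain ⟨z', hz', hz'max⟩ := (univ.filter (u · < u m)).exists_max_image u
    ⟨z, by simpa using hzx.trans_le (hm x (mem_univ x))⟩
  replace hz' : u z' < u m := (mem_filter.1 hz').2
  have htop : ∀ x, u z' < u x → u x = u m := fun x hx =>
    (hm x (mem_univ x)).antisymm (not_lt.1 fun h => (hz'max x (by simpa using h)).not_gt hx)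
  have hsplit : ∑ x, u x * d x =
      ∑ x, min (u x) (u z') * d x + (u m - u z') * ∑ x with u z' < u x, d x := by
    rw [sum_filter, mul_sum, ← sum_add_distrib]
    refine sum_congr rfl fun x _ => ?_
    by_cases hx : u z' < u x
    · rw [if_pos hx, min_eq_right hx.le, htop x hx]
      ring
    · simp [hx, min_eq_left (not_lt.1 hx)]
  obtain ⟨ih_nonneg, ih_pos⟩ := ih _ (hn ▸ card_image_min_lt hz') _
    (fun z => by rw [sum_filter_min_lt_min]; split_ifs <;> simp [h z]) rfl
  have hgap : 0 < u m - u z' := sub_pos.2 hz'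
  refine ⟨hsplit ▸ add_nonneg ih_nonneg (mul_nonneg hgap.le (h z')), ?_⟩
  rintro ⟨z₀, hz₀⟩
  rw [hsplit]
  by_cases hlt : u z₀ < u z'
  · exact add_pos_of_pos_of_nonneg (ih_pos ⟨z₀, by rwa [sum_filter_min_lt_min, if_pos hlt]⟩)
      (mul_nonneg hgap.le (h z'))
  · obtain ⟨x, hx, -⟩ := exists_ne_zero_of_sum_ne_zero hz₀.ne'
    have hz₀m : u z₀ < u m := (mem_filter.1 hx).2.trans_le (hm x (mem_univ x))
    have heq : u z₀ = u z' := (hz'max z₀ (by simpa using hz₀m)).antisymm (not_lt.1 hlt)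
    exact add_pos_of_nonneg_of_pos ih_nonneg (mul_pos hgap (heq ▸ hz₀))

end AbelSummation

section Dominance

variable {X : Type*} [Fintype X] {r : X → X → Prop}

theorem upWeight_add (p q : X → ℝ) (z : X) :
    upWeight r (p + q) z = upWeight r p z + upWeight r q z :=
  sum_add_distrib

theorem upWeight_sub (p q : X → ℝ) (z : X) :
    upWeight r (p - q) z = upWeight r p z - upWeight r q z :=
  sum_sub_distrib _ _

theorem upWeight_smul (c : ℝ) (p : X → ℝ) (z : X) : upWeight r (c • p) z = c * upWeight r p z :=
  (mul_sum _ _ _).symm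

theorem upWeight_single (y z : X) :
    upWeight r (Pi.single y 1) z = if strictPref r y z then 1 else 0 := by
  simp [upWeight, sum_pi_single']

theorem Represents.upWeight_eq {u : X → ℝ} (hu : Represents u r) (p : X → ℝ) (z : X) :
    upWeight r p z = ∑ x with u z < u x, p x := by
  simp only [upWeight, hu.strictPref_iff]

theorem SDge.upperSums_sub_nonneg {u p q : X → ℝ} (hu : Represents u r) (h : SDge r q p)
    (z : X) : 0 ≤ ∑ x with u z < u x, (q - p) x := by
  rw [← hu.upWeight_eq, upWeight_sub, sub_nonneg]
  exact h z

theorem SDge.sum_mul_le_sum_mul {u p q : X → ℝ} (hu : Represents u r)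
    (hsum : ∑ x, p x = ∑ x, q x) (h : SDge r q p) : ∑ x, u x * p x ≤ ∑ x, u x * q x := by
  have := (sum_mul_nonneg_of_upperSums_nonneg (d := q - p) (by simp [sum_sub_distrib, hsum]) u
    (h.upperSums_sub_nonneg hu)).1
  simpa [mul_sub, sum_sub_distrib] using this

theorem SDgt.sum_mul_lt_sum_mul {u p q : X → ℝ} (hu : Represents u r)
    (hsum : ∑ x, p x = ∑ x, q x) (h : SDgt r q p) : ∑ x, u x * p x < ∑ x, u x * q x := by
  obtain ⟨z, hz⟩ := h.2
  have := (sum_mul_nonneg_of_upperSums_nonneg (d := q - p) (by simp [sum_sub_distrib, hsum]) u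
    (h.1.upperSums_sub_nonneg hu)).2 ⟨z, by rwa [← hu.upWeight_eq, upWeight_sub, sub_pos]⟩
  simpa [mul_sub, sum_sub_distrib] using this

end Dominance

theorem exists_pos_forall_nonneg_add_mul {X : Type*} [Finite X] {p d : X → ℝ} (hp : ∀ x, 0 ≤ p x)
    (hd : ∀ x, p x = 0 → 0 ≤ d x) : ∃ ε > 0, ∀ x, 0 ≤ p x + ε * d x := by
  have : ∀ x, ∀ᶠ ε in 𝓝[>] (0 : ℝ), 0 ≤ p x + ε * d x := by
    intro x
    rcases (hp x).eq_or_lt with h | h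
    · filter_upwards [self_mem_nhdsWithin] with ε (hε : 0 < ε)
      rw [← h, zero_add]
      exact mul_nonneg hε.le (hd x h.symm)
    · have : Tendsto (fun ε => p x + ε * d x) (𝓝[>] 0) (𝓝 (p x)) :=
        ((continuous_const.add (continuous_id.mul continuous_const)).tendsto' 0 _
          (by simp)).mono_left nhdsWithin_le_nhds
      exact (this.eventually_const_lt h).mono fun _ => le_of_lt
  obtain ⟨ε, hε, hε0⟩ := ((eventually_all.2 this).and self_mem_nhdsWithin).exists
  exact ⟨ε, hε0, hε⟩

section Lottery

variable {X : Type*} [Fintype X]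

theorem IsLottery.exists_pos {p : X → ℝ} (hp : IsLottery p) : ∃ x, 0 < p x := by
  by_contra! h
  have : ∑ x, p x = 0 := sum_eq_zero fun x _ => (h x).antisymm (hp.1 x)
  exact zero_ne_one (this.symm.trans hp.2)

theorem IsLottery.sum_mul_le_of_support_maximizes {p q W : X → ℝ} (hp : IsLottery p)
    (hq : IsLottery q) (hW : ∀ x, 0 < p x → ∀ y, W y ≤ W x) :
    ∑ x, W x * q x ≤ ∑ x, W x * p x := by
  obtain ⟨x₀, hx₀⟩ := hp.exists_pos
  have hconst : ∀ x, W x * p x = W x₀ * p x := fun x => by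
    rcases (hp.1 x).eq_or_lt with h | h
    · simp [← h]
    · rw [(hW x₀ hx₀ x).antisymm (hW x h x₀)]
  calc ∑ x, W x * q x ≤ ∑ x, W x₀ * q x :=
        sum_le_sum fun x _ => mul_le_mul_of_nonneg_right (hW x₀ hx₀ x) (hq.1 x)
    _ = ∑ x, W x * p x := by simp only [hconst, ← mul_sum, hp.2, hq.2]

end Lottery

section Efficiency

variable {X N : Type*} [Fintype X] {pref : N → X → X → Prop} {p : X → ℝ}

theorem not_exAnteEff_of_improvement {d : X → ℝ} (hp : IsLottery p) (hd : ∑ x, d x = 0)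
    (hdp : ∀ x, p x = 0 → 0 ≤ d x) (hge : ∀ i z, 0 ≤ upWeight (pref i) d z)
    (hgt : ∃ j z, 0 < upWeight (pref j) d z) : ¬ ExAnteEff pref p := by
  obtain ⟨ε, hε, hq⟩ := exists_pos_forall_nonneg_add_mul hp.1 hdp
  have hup : ∀ i z, upWeight (pref i) (p + ε • d) z =
      upWeight (pref i) p z + ε * upWeight (pref i) d z := fun i z => by
    rw [upWeight_add, upWeight_smul]
  obtain ⟨j, z, hz⟩ := hgt
  refine fun heff => heff ⟨p + ε • d, ⟨hq, ?_⟩, fun i z => ?_, j, fun z => ?_, z, ?_⟩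
  · simp [sum_add_distrib, ← mul_sum, hp.2, hd]
  all_goals rw [hup]
  · exact le_add_of_nonneg_right (mul_nonneg hε.le (hge i z))
  · exact le_add_of_nonneg_right (mul_nonneg hε.le (hge j z))
  · exact lt_add_of_pos_right _ (mul_pos hε hz)

variable (pref p) in
def improvementCone : PointedCone ℝ (N × X → ℝ) :=
  PointedCone.hull ℝ (Set.range fun yx : X × {x // 0 < p x} =>
    fun k : N × X => upWeight (pref k.1) (Pi.single yx.1 1 - Pi.single yx.2.1 1) k.2)

theorem exists_improvement_of_mem_improvementCone {v : N × X → ℝ}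
    (hv : v ∈ improvementCone pref p) :
    ∃ d : X → ℝ, ∑ x, d x = 0 ∧ (∀ x, p x = 0 → 0 ≤ d x) ∧
      ∀ i z, v (i, z) = upWeight (pref i) d z := by
  induction hv using Submodule.span_induction with
  | mem v hv =>
    obtain ⟨⟨y, x, hx⟩, rfl⟩ := hv
    refine ⟨Pi.single y 1 - Pi.single x 1, by simp [sum_sub_distrib], fun z hz => ?_,
      fun _ _ => rfl⟩
    have : z ≠ x := by rintro rfl; exact hx.ne' hz
    rw [Pi.sub_apply, Pi.single_eq_of_ne this, sub_zero, Pi.single_apply]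
    positivity
  | zero => exact ⟨0, by simp, by simp, fun i z => by simp [upWeight]⟩
  | add v v' _ _ hv hv' =>
    obtain ⟨d, hd, hdp, hdv⟩ := hv
    obtain ⟨d', hd', hdp', hdv'⟩ := hv'
    exact ⟨d + d', by simp [sum_add_distrib, hd, hd'],
      fun x hx => add_nonneg (hdp x hx) (hdp' x hx), fun i z => by simp [hdv, hdv', upWeight_add]⟩
  | smul c v _ hv =>
    obtain ⟨d, hd, hdp, hdv⟩ := hv
    exact ⟨(c : ℝ) • d, by simp [← mul_sum, hd], fun x hx => mul_nonneg c.2 (hdp x hx),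
      fun i z => by rw [upWeight_smul, ← hdv, ← Nonneg.coe_smul]; rfl⟩

theorem disjoint_stdSimplex_improvementCone [Fintype N] (hp : IsLottery p)
    (heff : ExAnteEff pref p) :
    Disjoint (stdSimplex ℝ (N × X)) (improvementCone pref p : Set (N × X → ℝ)) := by
  refine Set.disjoint_left.2 fun v hvΔ hvC => ?_
  obtain ⟨d, hd, hdp, hdv⟩ := exists_improvement_of_mem_improvementCone hvC
  obtain ⟨⟨j, z⟩, hjz⟩ := (show IsLottery v from hvΔ).exists_pos
  refine not_exAnteEff_of_improvement hp hd hdp (fun i z => ?_) ⟨j, z, ?_⟩ heff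
  · exact hdv i z ▸ hvΔ.1 (i, z)
  · exact hdv j z ▸ hjz

theorem ExAnteEff.exists_pos_weights [Fintype N] (hp : IsLottery p) (heff : ExAnteEff pref p) :
    ∃ w : N × X → ℝ, (∀ k, 0 < w k) ∧ ∀ x, 0 < p x → ∀ y,
      ∑ i, ∑ z, w (i, z) * (if strictPref (pref i) y z then 1 else 0) ≤
        ∑ i, ∑ z, w (i, z) * (if strictPref (pref i) x z then 1 else 0) := by
  let C : ProperCone ℝ (N × X → ℝ) :=
    ⟨improvementCone pref p, PointedCone.isClosed_hull_of_finite (Set.finite_range _)⟩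
  obtain ⟨f, hfC, hfΔ⟩ := C.hyperplane_separation (convex_stdSimplex ℝ _)
    (isCompact_stdSimplex ℝ _) (disjoint_stdSimplex_improvementCone hp heff)
  refine ⟨fun k => -f (if k = · then 1 else 0),
    fun k => neg_pos.2 (hfΔ _ (ite_eq_mem_stdSimplex ℝ k)), fun x hx y => ?_⟩
  have hgen := hfC _ (PointedCone.subset_hull ⟨(y, ⟨x, hx⟩), rfl⟩)
  rw [← ContinuousLinearMap.coe_coe, LinearMap.pi_apply_eq_sum_univ] at hgen
  simp only [upWeight_sub, upWeight_single, ContinuousLinearMap.coe_coe, smul_eq_mul] at hgen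
  rw [Fintype.sum_prod_type] at hgen
  rw [← sub_nonneg]
  convert hgen using 1
  simp only [← sum_sub_distrib]
  exact sum_congr rfl fun i _ => sum_congr rfl fun z _ => by ring

end Efficiency

theorem exAnteEff_of_utilitarian {X N : Type*} [Fintype X] [Fintype N] {pref : N → X → X → Prop}
    {p : X → ℝ} (hp : IsLottery p) {u : N → X → ℝ} (hu : ∀ i, Represents (u i) (pref i))
    (hmax : ∀ x, 0 < p x → ∀ y, ∑ i, u i y ≤ ∑ i, u i x) : ExAnteEff pref p := by
  rintro ⟨q, hq, hge, j, hgt⟩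
  have hlt : ∑ i, ∑ x, u i x * p x < ∑ i, ∑ x, u i x * q x :=
    sum_lt_sum (fun i _ => (hge i).sum_mul_le_sum_mul (hu i) (hp.2.trans hq.2.symm))
      ⟨j, mem_univ j, hgt.sum_mul_lt_sum_mul (hu j) (hp.2.trans hq.2.symm)⟩
  simp only [sum_comm (γ := N), ← sum_mul] at hlt
  exact hlt.not_ge (hp.sum_mul_le_of_support_maximizes hq hmax)

theorem stmt_0_general {X N : Type*} [Fintype X] [Fintype N]
    (pref : N → X → X → Prop) (hpref : ∀ i, IsPrefOrder (pref i))
    (p : X → ℝ) (hp : IsLottery p) :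
    ExAnteEff pref p ↔
      ∃ u : N → X → ℝ, (∀ i, Represents (u i) (pref i)) ∧
        ∀ x, 0 < p x → ∀ y, ∑ i, u i y ≤ ∑ i, u i x := by
  refine ⟨fun heff => ?_, fun ⟨u, hu, hmax⟩ => exAnteEff_of_utilitarian hp hu hmax⟩
  obtain ⟨w, hw, hwelfare⟩ := heff.exists_pos_weights hp
  exact ⟨fun i y => ∑ z, w (i, z) * if strictPref (pref i) y z then 1 else 0,
    fun i => represents_sum_strictPref_indicator (hpref i) fun z => hw (i, z), hwelfare⟩

/-- A lottery is ex-ante efficient iff there is a utilitarian representation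
for which it is supported on outcomes of maximal welfare. -/
theorem stmt_0 {X N : Type*} [Fintype X] [Nonempty X] [Fintype N] [Nonempty N]
    (pref : N → X → X → Prop) (hpref : ∀ i, IsPrefOrder (pref i))
    (p : X → ℝ) (hp : IsLottery p) :
    ExAnteEff pref p ↔
      ∃ u : N → X → ℝ, (∀ i, Represents (u i) (pref i)) ∧
        ∀ x, 0 < p x → ∀ y, ∑ i, u i y ≤ ∑ i, u i x :=
  stmt_0_general pref hpref p hp
end

section
/- If p is an ex-ante efficient lottery and q is any lottery with supp q ⊆ supp p, then q is also ex-ante efficient. -/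
attribute [local instance] Classical.propDecidable

lemma upWeight_lin {X : Type*} [Fintype X] (r : X → X → Prop) (p q q' : X → ℝ) (ε : ℝ)
    (x : X) :
    upWeight r (fun y => p y + ε * (q' y - q y)) x
      = upWeight r p x + ε * (upWeight r q' x - upWeight r q x) := by
  simp only [upWeight, ← Finset.sum_sub_distrib, Finset.mul_sum, ← Finset.sum_add_distrib,
    mul_sub]

/-- If `p` is an ex-ante efficient lottery and `q` is a lottery with
`supp q ⊆ supp p`, then `q` is ex-ante efficient. -/
theorem stmt_1 {X N : Type*} [Fintype X] [Nonempty X] [Fintype N] [Nonempty N]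
    (pref : N → X → X → Prop) (hpref : ∀ i, IsPrefOrder (pref i))
    (p q : X → ℝ) (hp : IsLottery p) (hq : IsLottery q)
    (hpe : ExAnteEff pref p)
    (hsupp : ∀ x, 0 < q x → 0 < p x) :
    ExAnteEff pref q := by
  rintro ⟨q', hq', hge, j, hgtge, x₀, hgt⟩
  have hqsupp : (Finset.univ.filter fun x => 0 < q x).Nonempty := by
    by_contra h
    rw [Finset.not_nonempty_iff_eq_empty] at h
    have hz : ∑ x, q x = 0 := Finset.sum_eq_zero fun x _ => by
      by_contra hx
      have hx' : 0 < q x := lt_of_le_of_ne (hq.1 x) (Ne.symm hx)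
      have : x ∈ Finset.univ.filter fun x => 0 < q x := by simp [hx']
      simp [h] at this
    rw [hq.2] at hz; norm_num at hz
  set S := Finset.univ.filter fun x => 0 < q x with hS
  set ε := S.inf' hqsupp (fun x => p x / q x) with hεdef
  have hεpos : 0 < ε := by
    rw [hεdef, Finset.lt_inf'_iff]
    intro x hx
    rw [hS, Finset.mem_filter] at hx
    exact div_pos (hsupp x hx.2) hx.2
  have hεle : ∀ x, 0 < q x → ε * q x ≤ p x := by
    intro x hx
    have : ε ≤ p x / q x := Finset.inf'_le _ (by simp [hS, hx])
    calc ε * q x ≤ p x / q x * q x := by nlinarith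
      _ = p x := div_mul_cancel₀ _ (ne_of_gt hx)
  set p' := fun y => p y + ε * (q' y - q y) with hp'
  apply hpe
  refine ⟨p', ⟨?_, ?_⟩, ?_, j, ?_, x₀, ?_⟩
  · intro x
    by_cases hx : 0 < q x
    · have := hεle x hx
      have hq'x := hq'.1 x
      simp only [hp']
      nlinarith
    · have hqx : q x = 0 := le_antisymm (not_lt.mp hx) (hq.1 x)
      have := hq'.1 x
      have := hp.1 x
      simp only [hp', hqx]
      nlinarith [hεpos]
  · simp only [hp', Finset.sum_add_distrib, ← Finset.mul_sum, Finset.sum_sub_distrib,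
      hp.2, hq.2, hq'.2]
    ring
  · intro i x
    have := hge i x
    rw [hp', upWeight_lin]
    nlinarith
  · intro x
    have := hgtge x
    rw [hp', upWeight_lin]
    nlinarith
  · rw [hp', upWeight_lin]
    nlinarith
end

section
/- The set of ex-ante efficient lotteries coincides with the set of ex-post efficient lotteries if and only if there is no vector α : X* → ℝ such that ∑_{x∈X*} α_x = 0, ∑_{y∈X* : y ≻_i x} α_y ≥ 0 for all agents i ∈ N and all x ∈ X*, and at least one of these inequalities is strict. -/
attribute [local instance] Classical.propDecidable

section aux
variable {X : Type*} [Fintype X] {N : Type*}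

open Finset

lemma pref_refl {r : X → X → Prop} (h : IsPrefOrder r) (x : X) : r x x := (h.1 x x).elim id id

lemma strict_of_ge_of_strict {r : X → X → Prop} (h : IsPrefOrder r) {x y w : X}
    (hyx : r y x) (hxw : strictPref r x w) : strictPref r y w :=
  ⟨h.2 hyx hxw.1, fun hwy => hxw.2 (h.2 hwy hyx)⟩

lemma utility_exists {r : X → X → Prop} (h : IsPrefOrder r) :
    ∃ u : X → ℕ, ∀ x y, r x y ↔ u y ≤ u x := by
  refine ⟨fun x => (Finset.univ.filter (fun w => r x w)).card, fun x y => ?_⟩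
  constructor
  · intro hxy
    apply Finset.card_le_card
    intro w hw
    simp only [Finset.mem_filter, Finset.mem_univ, true_and] at *
    exact h.2 hxy hw
  · intro hc
    by_contra hxy
    have hyx : r y x := (h.1 x y).resolve_left hxy
    have hss : Finset.univ.filter (fun w => r x w) ⊂ Finset.univ.filter (fun w => r y w) := by
      refine ⟨fun w hw => ?_, fun hsub => ?_⟩
      · simp only [Finset.mem_filter, Finset.mem_univ, true_and] at *
        exact h.2 hyx hw
      · have := hsub (by simp [pref_refl h y] : y ∈ Finset.univ.filter (fun w => r y w))
        simp only [Finset.mem_filter, Finset.mem_univ, true_and] at this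
        exact hxy this
    exact absurd hc (not_le.mpr (Finset.card_lt_card hss))

lemma utility_strict {r : X → X → Prop} {u : X → ℕ} (hu : ∀ x y, r x y ↔ u y ≤ u x)
    (x y : X) : strictPref r x y ↔ u y < u x := by
  unfold strictPref
  rw [hu, hu, lt_iff_le_not_ge]

lemma sigma_exists [Fintype N] (pref : N → X → X → Prop) (hpref : ∀ i, IsPrefOrder (pref i))
    (x : X) : ∃ y, ParetoOptimal pref y ∧ ∀ i, pref i y x := by
  choose u hu using fun i => utility_exists (hpref i)
  set D := Finset.univ.filter (fun y => ∀ i, pref i y x) with hD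
  have hxD : x ∈ D := by simp [hD, fun i => pref_refl (hpref i) x]
  obtain ⟨y, hyD, hmax⟩ := Finset.exists_max_image D (fun y => ∑ i, u i y) ⟨x, hxD⟩
  simp only [hD, Finset.mem_filter, Finset.mem_univ, true_and] at hyD
  refine ⟨y, ?_, hyD⟩
  rintro ⟨z, hz, j, hj⟩
  have hzD : z ∈ D := by
    simp only [hD, Finset.mem_filter, Finset.mem_univ, true_and]
    exact fun i => (hpref i).2 (hz i) (hyD i)
  have hle := hmax z hzD
  have hlt : (∑ i, u i y) < ∑ i, u i z := by
    refine Finset.sum_lt_sum (fun i _ => ?_) ⟨j, Finset.mem_univ j, ?_⟩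
    · exact (hu i z y).mp (hz i)
    · exact (utility_strict (hu j) z y).mp hj
  omega

lemma reduce (pref : N → X → X → Prop) (hpref : ∀ i, IsPrefOrder (pref i)) (i : N) (z : X) :
    (Finset.univ.filter (fun y => ParetoOptimal pref y ∧ strictPref (pref i) y z)
       = Finset.univ.filter (fun y => ParetoOptimal pref y)) ∨
    ∃ x, ParetoOptimal pref x ∧
      Finset.univ.filter (fun y => ParetoOptimal pref y ∧ strictPref (pref i) y z)
        = Finset.univ.filter (fun y => ParetoOptimal pref y ∧ strictPref (pref i) y x) := by
  obtain ⟨u, hu⟩ := utility_exists (hpref i)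
  set T := Finset.univ.filter (fun y => ParetoOptimal pref y ∧ ¬ strictPref (pref i) y z) with hT
  by_cases hTne : T.Nonempty
  · obtain ⟨x, hxT, hmax⟩ := Finset.exists_max_image T u hTne
    simp only [hT, Finset.mem_filter, Finset.mem_univ, true_and] at hxT
    refine Or.inr ⟨x, hxT.1, ?_⟩
    ext y
    simp only [Finset.mem_filter, Finset.mem_univ, true_and]
    constructor
    · rintro ⟨hy, hyz⟩
      refine ⟨hy, (utility_strict hu y x).mpr ?_⟩
      have h1 : u z < u y := (utility_strict hu y z).mp hyz
      have h2 : ¬ (u z < u x) := fun hc => hxT.2 ((utility_strict hu x z).mpr hc)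
      omega
    · rintro ⟨hy, hyx⟩
      refine ⟨hy, (utility_strict hu y z).mpr ?_⟩
      by_contra hc
      have hyT : y ∈ T := by
        simp only [hT, Finset.mem_filter, Finset.mem_univ, true_and]
        exact ⟨hy, fun hs => hc ((utility_strict hu y z).mp hs)⟩
      have := hmax y hyT
      have := (utility_strict hu y x).mp hyx
      omega
  · refine Or.inl ?_
    ext y
    simp only [Finset.mem_filter, Finset.mem_univ, true_and]
    constructor
    · exact fun h => h.1
    · intro hy
      refine ⟨hy, ?_⟩
      by_contra hc
      exact hTne ⟨y, by simp [hT, hy, hc]⟩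

end aux

section aux2
variable {X : Type*} [Fintype X] {N : Type*} [Fintype N]

open Finset

lemma strict_irrefl {r : X → X → Prop} (h : IsPrefOrder r) (x : X) : ¬ strictPref r x x :=
  fun hs => hs.2 (pref_refl h x)

lemma expost_of_exante (pref : N → X → X → Prop) (hpref : ∀ i, IsPrefOrder (pref i))
    {p : X → ℝ} (hp : IsLottery p) (hae : ExAnteEff pref p) : ExPostEff pref p := by
  intro x hx
  by_contra hnpo
  rw [ParetoOptimal, not_not] at hnpo
  obtain ⟨y, hy, j, hj⟩ := hnpo
  have hyx : y ≠ x := fun he => hj.2 (he ▸ pref_refl (hpref j) x)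
  set q : X → ℝ := fun z => p z + p x * ((if z = y then 1 else 0) - (if z = x then 1 else 0))
    with hqdef
  have hup : ∀ i w, upWeight (pref i) q w = upWeight (pref i) p w +
      p x * ((if strictPref (pref i) y w then 1 else 0) -
             (if strictPref (pref i) x w then 1 else 0)) := by
    intro i w
    unfold upWeight
    simp only [hqdef]
    rw [Finset.sum_add_distrib, ← Finset.mul_sum, Finset.sum_sub_distrib,
      Finset.sum_ite_eq', Finset.sum_ite_eq']
    simp [Finset.mem_filter]
  have hbr : ∀ i w, 0 ≤ ((if strictPref (pref i) y w then (1:ℝ) else 0) -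
      (if strictPref (pref i) x w then 1 else 0)) := by
    intro i w
    by_cases hxw : strictPref (pref i) x w
    · have := strict_of_ge_of_strict (hpref i) (hy i) hxw
      simp [hxw, this]
    · simp only [hxw, if_false, sub_zero]
      split <;> norm_num
  apply hae
  refine ⟨q, ⟨?_, ?_⟩, fun i w => ?_, j, fun w => ?_, x, ?_⟩
  · intro z
    by_cases hzy : z = y
    · subst hzy
      simp only [hqdef, if_pos rfl, if_neg hyx]
      norm_num
      have := hp.1 z; have := hp.1 x; nlinarith
    · by_cases hzx : z = x
      · subst hzx
        simp only [hqdef, if_neg hzy, if_pos rfl]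
        norm_num
      · simpa [hqdef, hzy, hzx] using hp.1 z
  · simp only [hqdef]
    rw [Finset.sum_add_distrib, ← Finset.mul_sum, Finset.sum_sub_distrib,
      Finset.sum_ite_eq', Finset.sum_ite_eq']
    simp [hp.2]
  · rw [hup]
    nlinarith [mul_nonneg (hp.1 x) (hbr i w)]
  · rw [hup]
    nlinarith [mul_nonneg (hp.1 x) (hbr j w)]
  · rw [hup j x]
    simp only [if_pos hj, if_neg (strict_irrefl (hpref j) x)]
    nlinarith

lemma exante_of_expost (pref : N → X → X → Prop) (hpref : ∀ i, IsPrefOrder (pref i))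
    (hα : ¬ ∃ α : X → ℝ,
        (∑ x ∈ Finset.univ.filter (fun x => ParetoOptimal pref x), α x = 0) ∧
        (∀ i x, ParetoOptimal pref x →
          0 ≤ ∑ y ∈ Finset.univ.filter
              (fun y => ParetoOptimal pref y ∧ strictPref (pref i) y x), α y) ∧
        (∃ i x, ParetoOptimal pref x ∧
          0 < ∑ y ∈ Finset.univ.filter
              (fun y => ParetoOptimal pref y ∧ strictPref (pref i) y x), α y))
    {p : X → ℝ} (hp : IsLottery p) (hpe : ExPostEff pref p) : ExAnteEff pref p := by
  rintro ⟨q, hq, hge, j, hgt⟩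
  choose σ hσPO hσge using sigma_exists pref hpref
  set q' : X → ℝ := fun x => ∑ z ∈ Finset.univ.filter (fun z => σ z = x), q z with hq'def
  have hq'0 : ∀ x, ¬ ParetoOptimal pref x → q' x = 0 := by
    intro x hx
    apply Finset.sum_eq_zero
    intro z hz
    exact absurd ((Finset.mem_filter.mp hz).2 ▸ hσPO z) hx
  have hp0 : ∀ x, ¬ ParetoOptimal pref x → p x = 0 := fun x hx =>
    le_antisymm (le_of_not_gt (fun h => hx (hpe x h))) (hp.1 x)
  have hupq' : ∀ i w, upWeight (pref i) q w ≤ upWeight (pref i) q' w := by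
    intro i w
    have key : upWeight (pref i) q' w =
        ∑ z ∈ Finset.univ.filter (fun z => strictPref (pref i) (σ z) w), q z := by
      unfold upWeight
      calc ∑ y ∈ Finset.univ.filter (fun y => strictPref (pref i) y w), q' y
          = ∑ y ∈ Finset.univ.filter (fun y => strictPref (pref i) y w),
              ∑ z ∈ (Finset.univ.filter (fun z => strictPref (pref i) (σ z) w)).filter
                (fun z => σ z = y), q z := by
            apply Finset.sum_congr rfl
            intro y hy
            simp only [Finset.mem_filter, Finset.mem_univ, true_and] at hy
            apply Finset.sum_congr ?_ (fun _ _ => rfl)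
            ext z
            simp only [Finset.mem_filter, Finset.mem_univ, true_and]
            constructor
            · intro hzy; exact ⟨hzy ▸ hy, hzy⟩
            · exact fun h => h.2
        _ = ∑ z ∈ Finset.univ.filter (fun z => strictPref (pref i) (σ z) w), q z := by
            apply Finset.sum_fiberwise_of_maps_to
            intro z hz
            simp only [Finset.mem_filter, Finset.mem_univ, true_and] at *
            exact hz
    rw [key]
    apply Finset.sum_le_sum_of_subset_of_nonneg
    · intro z hz
      simp only [Finset.mem_filter, Finset.mem_univ, true_and] at *
      exact strict_of_ge_of_strict (hpref i) (hσge z i) hz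
    · exact fun z _ _ => hq.1 z
  have hsum_q' : ∑ x ∈ Finset.univ.filter (fun x => ParetoOptimal pref x), q' x = 1 := by
    rw [Finset.sum_subset (Finset.subset_univ _)
      (fun x _ hx => hq'0 x (by simpa using hx))]
    rw [show ∑ x, q' x = ∑ z, q z from Finset.sum_fiberwise Finset.univ σ q]
    exact hq.2
  have hsum_p : ∑ x ∈ Finset.univ.filter (fun x => ParetoOptimal pref x), p x = 1 := by
    rw [Finset.sum_subset (Finset.subset_univ _)
      (fun x _ hx => hp0 x (by simpa using hx))]
    exact hp.2
  have key2 : ∀ (i : N) (x : X),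
      ∑ y ∈ Finset.univ.filter (fun y => ParetoOptimal pref y ∧ strictPref (pref i) y x),
        (q' y - p y) = upWeight (pref i) q' x - upWeight (pref i) p x := by
    intro i x
    rw [Finset.sum_subset (s₁ := Finset.univ.filter
        (fun y => ParetoOptimal pref y ∧ strictPref (pref i) y x))
        (s₂ := Finset.univ.filter (fun y => strictPref (pref i) y x))
        (by intro z hz; simp only [Finset.mem_filter, Finset.mem_univ, true_and] at *; exact hz.2)
        (by intro z hz hz2
            simp only [Finset.mem_filter, Finset.mem_univ, true_and] at hz hz2
            have : ¬ ParetoOptimal pref z := fun h => hz2 ⟨h, hz⟩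
            rw [hq'0 z this, hp0 z this, sub_zero])]
    rw [Finset.sum_sub_distrib]
    rfl
  apply hα
  refine ⟨fun x => q' x - p x, ?_, ?_, ?_⟩
  · rw [Finset.sum_sub_distrib, hsum_q', hsum_p, sub_self]
  · intro i x _
    rw [key2 i x]
    have := hge i x
    have := hupq' i x
    linarith
  · obtain ⟨w, hw⟩ := hgt.2
    have hpos : 0 < ∑ y ∈ Finset.univ.filter
        (fun y => ParetoOptimal pref y ∧ strictPref (pref j) y w), (q' y - p y) := by
      rw [key2 j w]
      have := hupq' j w
      linarith
    rcases reduce pref hpref j w with heq | ⟨x, hxPO, heq⟩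
    · rw [heq] at hpos
      rw [Finset.sum_sub_distrib, hsum_q', hsum_p, sub_self] at hpos
      exact absurd hpos (lt_irrefl 0)
    · exact ⟨j, x, hxPO, heq ▸ hpos⟩

end aux2
/-- Ex-ante efficiency coincides with ex-post efficiency iff the linear system
over Pareto optimal outcomes has no nontrivial solution `α`. -/
theorem stmt_7 {X N : Type*} [Fintype X] [Nonempty X] [Fintype N] [Nonempty N]
    (pref : N → X → X → Prop) (hpref : ∀ i, IsPrefOrder (pref i)) :
    ({p : X → ℝ | IsLottery p ∧ ExAnteEff pref p} =
        {p : X → ℝ | IsLottery p ∧ ExPostEff pref p}) ↔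
      ¬ ∃ α : X → ℝ,
        (∑ x ∈ Finset.univ.filter (fun x => ParetoOptimal pref x), α x = 0) ∧
        (∀ i x, ParetoOptimal pref x →
          0 ≤ ∑ y ∈ Finset.univ.filter
              (fun y => ParetoOptimal pref y ∧ strictPref (pref i) y x), α y) ∧
        (∃ i x, ParetoOptimal pref x ∧
          0 < ∑ y ∈ Finset.univ.filter
              (fun y => ParetoOptimal pref y ∧ strictPref (pref i) y x), α y) := by

  constructor
  · intro hset
    rintro ⟨α, h0, hge, i, x, hxPO, hpos⟩
    set K := Finset.univ.filter (fun x => ParetoOptimal pref x) with hK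
    have hKne : K.Nonempty := by
      obtain ⟨y, hy, -⟩ := sigma_exists pref hpref (Classical.arbitrary X)
      exact ⟨y, by simp [hK, hy]⟩
    set c : ℝ := ((K.card : ℝ))⁻¹ with hc
    have hc0 : 0 < c := by
      rw [hc]
      have := Finset.card_pos.mpr hKne
      positivity
    set B : ℝ := ∑ y, |α y| with hB
    have hB0 : 0 ≤ B := Finset.sum_nonneg (fun y _ => abs_nonneg _)
    set t : ℝ := c / (B + 1) with ht
    have ht0 : 0 < t := div_pos hc0 (by linarith)
    have htB : t * B < c := by
      rw [ht]
      rw [div_mul_eq_mul_div, div_lt_iff₀ (by linarith : (0:ℝ) < B + 1)]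
      nlinarith
    have habs : ∀ y, |α y| ≤ B := fun y =>
      Finset.single_le_sum (f := fun z => |α z|) (fun z _ => abs_nonneg (α z)) (Finset.mem_univ y)
    set p0 : X → ℝ := fun z => if ParetoOptimal pref z then c else 0 with hp0def
    set q0 : X → ℝ := fun z => p0 z + t * (if ParetoOptimal pref z then α z else 0) with hq0def
    have hmask : ∀ (F : Finset X), (∑ y ∈ F, if ParetoOptimal pref y then α y else 0)
        = ∑ y ∈ F.filter (fun y => ParetoOptimal pref y), α y :=
      fun F => (Finset.sum_filter _ _).symm
    have hswap : ∀ (i' : N) (w : X),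
        (Finset.univ.filter (fun y => strictPref (pref i') y w)).filter
            (fun y => ParetoOptimal pref y)
          = Finset.univ.filter (fun y => ParetoOptimal pref y ∧ strictPref (pref i') y w) := by
      intro i' w
      rw [Finset.filter_filter]
      ext y
      simp only [Finset.mem_filter, Finset.mem_univ, true_and]
      tauto
    have hp0sum : ∑ z, p0 z = 1 := by
      rw [hp0def]
      rw [← Finset.sum_filter, ← hK, Finset.sum_const, nsmul_eq_mul, hc]
      have : (K.card : ℝ) ≠ 0 := by
        have := Finset.card_pos.mpr hKne
        positivity
      field_simp
    have hp0l : IsLottery p0 := by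
      refine ⟨fun z => ?_, hp0sum⟩
      rw [hp0def]
      dsimp only
      split
      · exact hc0.le
      · exact le_refl 0
    have hp0e : ExPostEff pref p0 := by
      intro z hz
      by_contra h
      rw [hp0def] at hz
      simp only [h, if_false] at hz
      exact lt_irrefl 0 hz
    have hup : ∀ (i' : N) (w : X), upWeight (pref i') q0 w = upWeight (pref i') p0 w +
        t * ∑ y ∈ Finset.univ.filter
          (fun y => ParetoOptimal pref y ∧ strictPref (pref i') y w), α y := by
      intro i' w
      unfold upWeight
      rw [hq0def]
      dsimp only
      rw [Finset.sum_add_distrib, ← Finset.mul_sum, hmask, hswap]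
    have hq0l : IsLottery q0 := by
      constructor
      · intro z
        rw [hq0def, hp0def]
        dsimp only
        by_cases hz : ParetoOptimal pref z
        · simp only [hz, if_true]
          have h1 : t * α z ≥ -(t * B) := by
            have := mul_le_mul_of_nonneg_left (habs z) ht0.le
            have := neg_abs_le (α z)
            nlinarith
          linarith
        · simp [hz]
      · rw [hq0def]
        dsimp only
        rw [Finset.sum_add_distrib, ← Finset.mul_sum, hmask, hp0sum, h0]
        ring
    have hge' : ∀ (i' : N) (w : X), 0 ≤ ∑ y ∈ Finset.univ.filter
        (fun y => ParetoOptimal pref y ∧ strictPref (pref i') y w), α y := by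
      intro i' w
      rcases reduce pref hpref i' w with heq | ⟨x'', hx''PO, heq⟩
      · rw [heq]
        rw [h0]
      · rw [heq]
        exact hge i' x'' hx''PO
    have hmem : p0 ∈ {p : X → ℝ | IsLottery p ∧ ExPostEff pref p} := ⟨hp0l, hp0e⟩
    rw [← hset] at hmem
    apply hmem.2
    refine ⟨q0, hq0l, fun i' w => ?_, i, fun w => ?_, x, ?_⟩
    · rw [hup]
      nlinarith [mul_nonneg ht0.le (hge' i' w)]
    · rw [hup]
      nlinarith [mul_nonneg ht0.le (hge' i w)]
    · rw [hup i x]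
      nlinarith [mul_pos ht0 hpos]
  · intro hα
    ext p
    simp only [Set.mem_setOf_eq]
    constructor
    · rintro ⟨hp, hae⟩
      exact ⟨hp, expost_of_exante pref hpref hp hae⟩
    · rintro ⟨hp, hpe⟩
      exact ⟨hp, exante_of_expost pref hpref hα hp hpe⟩
end

section
/- If there are at most 2 agents (|N| ≤ 2), then every ex-post efficient lottery is ex-ante efficient. -/
attribute [local instance] Classical.propDecidable

private lemma exists_top' {X : Type*} {r : X → X → Prop}
    (hc : ∀ x y, r x y ∨ r y x) (ht : Transitive r) :
    ∀ s : Finset X, s.Nonempty → ∃ w ∈ s, ∀ y ∈ s, r w y := by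
  classical
  intro s
  induction s using Finset.induction_on with
  | empty => intro h; exact absurd h (by simp)
  | @insert a s ha ih =>
    intro _
    rcases s.eq_empty_or_nonempty with rfl | hs
    · exact ⟨a, by simp, by simp [(hc a a).elim id id]⟩
    · obtain ⟨w, hw, hwall⟩ := ih hs
      rcases hc a w with h | h
      · refine ⟨a, Finset.mem_insert_self _ _, ?_⟩
        intro y hy
        rcases Finset.mem_insert.1 hy with rfl | hy
        · exact (hc y y).elim id id
        · exact ht h (hwall y hy)
      · refine ⟨w, Finset.mem_insert_of_mem hw, ?_⟩
        intro y hy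
        rcases Finset.mem_insert.1 hy with rfl | hy
        · exact h
        · exact hwall y hy

/-- With at most 2 agents, every ex-post efficient lottery is ex-ante
efficient. -/
theorem stmt_9 {X N : Type*} [Fintype X] [Nonempty X] [Fintype N] [Nonempty N]
    (pref : N → X → X → Prop) (hpref : ∀ i, IsPrefOrder (pref i))
    (hN : Fintype.card N ≤ 2)
    (p : X → ℝ) (hp : IsLottery p) (hpost : ExPostEff pref p) :
    ExAnteEff pref p := by
  classical
  rintro ⟨q, hq, hge, j, _, x₀, hx₀⟩
  -- the "other" agent
  obtain ⟨j2, hj2⟩ : ∃ j2 : N, ∀ i : N, i = j ∨ i = j2 := by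
    by_cases h : ∃ i : N, i ≠ j
    · obtain ⟨j2, hj2⟩ := h
      refine ⟨j2, fun i => ?_⟩
      by_contra hcon
      push_neg at hcon
      obtain ⟨h1, h2⟩ := hcon
      have hcard : ({j, j2, i} : Finset N).card ≤ Fintype.card N :=
        Finset.card_le_univ _
      rw [Finset.card_insert_of_notMem (by simp [Ne.symm hj2, Ne.symm h1]),
        Finset.card_insert_of_notMem (by simp [Ne.symm h2]),
        Finset.card_singleton] at hcard
      omega
    · push_neg at h
      exact ⟨j, fun i => Or.inl (h i)⟩
  obtain ⟨hc1, ht1⟩ := hpref j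
  obtain ⟨hc2, ht2⟩ := hpref j2
  obtain ⟨hq0, hq1⟩ := hq
  obtain ⟨hp0, hp1⟩ := hp
  -- key Pareto consequences
  have key : ∀ x y : X, 0 < p x → strictPref (pref j) y x → pref j2 y x → False := by
    intro x y hx hs h2
    exact hpost x hx ⟨y, fun i => (hj2 i).elim (fun h => h ▸ hs.1) (fun h => h ▸ h2), j, hs⟩
  have opposed : ∀ x y : X, 0 < p x → pref j y x → pref j2 x y := by
    intro x y hx h1
    by_contra h
    exact hpost x hx ⟨y, fun i => (hj2 i).elim (fun hh => hh ▸ h1)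
      (fun hh => hh ▸ ((hc2 y x).resolve_right h)), j2, (hc2 y x).resolve_right h, h⟩
  -- any upWeight of q is at most 1
  have hqle : ∀ (r : X → X → Prop) (x : X), upWeight r q x ≤ 1 := by
    intro r x
    rw [upWeight, ← hq1]
    exact Finset.sum_le_sum_of_subset_of_nonneg (Finset.subset_univ _)
      (fun y _ _ => hq0 y)
  -- the set S of support points weakly below x₀ for agent j is nonempty
  have hSne : (Finset.univ.filter (fun y => 0 < p y ∧ pref j x₀ y)).Nonempty := by
    by_contra hcon
    rw [Finset.filter_nonempty_iff] at hcon
    push_neg at hcon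
    have hzero : ∀ y : X, y ∉ Finset.univ.filter (fun y => strictPref (pref j) y x₀) → p y = 0 := by
      intro y hy
      by_contra hpy
      have hpy' : 0 < p y := lt_of_le_of_ne (hp0 y) (Ne.symm hpy)
      have hnot : ¬ pref j x₀ y := by
        intro h
        exact absurd h (hcon y (Finset.mem_univ y) hpy')
      have : strictPref (pref j) y x₀ := ⟨(hc1 y x₀).resolve_right hnot, hnot⟩
      exact hy (Finset.mem_filter.2 ⟨Finset.mem_univ y, this⟩)
    have : upWeight (pref j) p x₀ = 1 := by
      rw [upWeight, ← hp1]
      exact Finset.sum_subset (Finset.subset_univ _) (fun y _ hy => hzero y hy)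
    have h2 := hqle (pref j) x₀
    rw [this] at hx₀
    linarith
  obtain ⟨w, hwmem, hwmax⟩ := exists_top' hc1 ht1 _ hSne
  rw [Finset.mem_filter] at hwmem
  obtain ⟨hwp, hx₀w⟩ := hwmem.2
  -- the two contour sets
  set U1 : Finset X := Finset.univ.filter (fun y => strictPref (pref j) y x₀) with hU1
  set W2 : Finset X := Finset.univ.filter (fun y => pref j2 y w) with hW2
  have hdisj : Disjoint U1 W2 := by
    rw [Finset.disjoint_left]
    intro y hy1 hy2
    rw [hU1, Finset.mem_filter] at hy1
    rw [hW2, Finset.mem_filter] at hy2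
    obtain ⟨-, hs⟩ := hy1
    refine key w y hwp ⟨ht1 hs.1 hx₀w, ?_⟩ hy2.2
    intro h
    exact hs.2 (ht1 hx₀w h)
  have hcover : ∀ y : X, 0 < p y → y ∈ U1 ∪ W2 := by
    intro y hy
    by_cases hcase : strictPref (pref j) y x₀
    · exact Finset.mem_union_left _ (Finset.mem_filter.2 ⟨Finset.mem_univ y, hcase⟩)
    · have hx₀y : pref j x₀ y := by
        rcases hc1 x₀ y with h | h
        · exact h
        · by_contra hn
          exact hcase ⟨h, hn⟩
      have hyS : y ∈ Finset.univ.filter (fun y => 0 < p y ∧ pref j x₀ y) :=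
        Finset.mem_filter.2 ⟨Finset.mem_univ y, hy, hx₀y⟩
      have hwy : pref j w y := hwmax y hyS
      exact Finset.mem_union_right _
        (Finset.mem_filter.2 ⟨Finset.mem_univ y, opposed y w hy hwy⟩)
  -- q puts at least as much mass on W2 as p
  have hW2mass : ∑ y ∈ W2, p y ≤ ∑ y ∈ W2, q y := by
    set L : Finset X := Finset.univ.filter (fun y => strictPref (pref j2) w y) with hL
    rcases L.eq_empty_or_nonempty with hLe | hLne
    · -- W2 = univ
      have hWuniv : W2 = Finset.univ := by
        rw [hW2]
        refine Finset.eq_univ_iff_forall.2 (fun y => Finset.mem_filter.2 ⟨Finset.mem_univ y, ?_⟩)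
        by_contra hn
        have hwy : pref j2 w y := (hc2 w y).resolve_right hn
        have : y ∈ L := Finset.mem_filter.2 ⟨Finset.mem_univ y, hwy, hn⟩
        rw [hLe] at this
        exact absurd this (Finset.notMem_empty y)
      rw [hWuniv, hp1, hq1]
    · obtain ⟨z, hz, hzmax⟩ := exists_top' hc2 ht2 L hLne
      rw [hL, Finset.mem_filter] at hz
      have hWeq : W2 = Finset.univ.filter (fun y => strictPref (pref j2) y z) := by
        ext y
        rw [hW2]
        simp only [Finset.mem_filter, Finset.mem_univ, true_and]
        constructor
        · intro hyw
          refine ⟨ht2 hyw hz.2.1, ?_⟩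
          intro hzy
          exact hz.2.2 (ht2 hzy hyw)
        · intro hs
          by_contra hn
          have hwy : pref j2 w y := (hc2 w y).resolve_right hn
          have hyL : y ∈ L := Finset.mem_filter.2 ⟨Finset.mem_univ y, hwy, hn⟩
          exact hs.2 (hzmax y hyL)
      have h2 : upWeight (pref j2) p z ≤ upWeight (pref j2) q z := hge j2 z
      rw [upWeight, upWeight] at h2
      rw [hWeq]
      exact h2
  -- final accounting
  have hpeq : ∑ y ∈ U1, p y + ∑ y ∈ W2, p y = 1 := by
    rw [← Finset.sum_union hdisj, ← hp1]
    refine Finset.sum_subset (Finset.subset_univ _) ?_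
    intro y _ hy
    by_contra hpy
    exact hy (hcover y (lt_of_le_of_ne (hp0 y) (Ne.symm hpy)))
  have hqle' : ∑ y ∈ U1, q y + ∑ y ∈ W2, q y ≤ 1 := by
    rw [← Finset.sum_union hdisj, ← hq1]
    exact Finset.sum_le_sum_of_subset_of_nonneg (Finset.subset_univ _) (fun y _ _ => hq0 y)
  have hU1lt : ∑ y ∈ U1, p y < ∑ y ∈ U1, q y := hx₀
  linarith
end

section
/- If there are exactly 3 agents (|N| = 3) and the set X* of Pareto optimal outcomes has at most 5 elements, then every ex-post efficient lottery is ex-ante efficient. -/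
attribute [local instance] Classical.propDecidable

namespace SD10
open Finset

variable {X : Type*}

lemma sp_irrefl (r : X → X → Prop) (x : X) : ¬ strictPref r x x := fun h => h.2 h.1

lemma pref_refl {r : X → X → Prop} (h : IsPrefOrder r) (x : X) : r x x := by
  rcases h.1 x x with h' | h' <;> exact h'

lemma strict_of_not {r : X → X → Prop} (h : IsPrefOrder r) {x y : X} (hxy : ¬ r x y) :
    strictPref r y x := ⟨(h.1 x y).resolve_left hxy, hxy⟩

lemma weak_strict_trans {r : X → X → Prop} (h : IsPrefOrder r) {a b c : X}
    (h1 : r a b) (h2 : strictPref r b c) : strictPref r a c :=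
  ⟨h.2 h1 h2.1, fun hca => h2.2 (h.2 hca h1)⟩

lemma strict_weak_trans {r : X → X → Prop} (h : IsPrefOrder r) {a b c : X}
    (h1 : strictPref r a b) (h2 : r b c) : strictPref r a c :=
  ⟨h.2 h1.1 h2, fun hca => h1.2 (h.2 h2 hca)⟩

lemma not_strict_of_weak {r : X → X → Prop} {x y : X} (hxy : r y x) : ¬ strictPref r x y :=
  fun h => h.2 hxy

/-- In a finite nonempty set there is a maximum for a total preorder. -/
lemma exists_top {r : X → X → Prop} (h : IsPrefOrder r) (B : Finset X) (hB : B.Nonempty) :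
    ∃ x ∈ B, ∀ y ∈ B, r x y := by
  classical
  induction B using Finset.induction_on with
  | empty => exact absurd hB (by simp)
  | @insert a B ha ih =>
    by_cases hBne : B.Nonempty
    · obtain ⟨x, hxB, hx⟩ := ih hBne
      rcases h.1 x a with hxa | hax
      · exact ⟨x, mem_insert_of_mem hxB, by
          intro y hy
          rcases mem_insert.1 hy with rfl | hy
          · exact hxa
          · exact hx y hy⟩
      · exact ⟨a, mem_insert_self a B, by
          intro y hy
          rcases mem_insert.1 hy with rfl | hy
          · exact pref_refl h _
          · exact h.2 hax (hx y hy)⟩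
    · rw [not_nonempty_iff_eq_empty] at hBne
      subst hBne
      exact ⟨a, mem_insert_self a _, by
        intro y hy
        rcases mem_insert.1 hy with rfl | hy
        · exact pref_refl h _
        · exact absurd hy (by simp)⟩

variable {N : Type*}

def Dominates (pref : N → X → X → Prop) (z y : X) : Prop :=
  (∀ i, pref i z y) ∧ ∃ j, strictPref (pref j) z y

lemma dom_trans {pref : N → X → X → Prop} (hpref : ∀ i, IsPrefOrder (pref i)) {a b c : X}
    (hab : Dominates pref a b) (hbc : Dominates pref b c) : Dominates pref a c := by
  refine ⟨fun i => (hpref i).2 (hab.1 i) (hbc.1 i), ?_⟩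
  obtain ⟨j, hj⟩ := hab.2
  exact ⟨j, strict_weak_trans (hpref j) hj (hbc.1 j)⟩

lemma dom_irrefl {pref : N → X → X → Prop} (z : X) : ¬ Dominates pref z z := by
  rintro ⟨-, j, hj⟩; exact sp_irrefl _ _ hj

lemma side_case [Fintype X] [Fintype N]
    (pref : N → X → X → Prop) (hpref : ∀ i, IsPrefOrder (pref i))
    (hN : Fintype.card N = 3) (A : Finset X) (d : X → ℝ)
    (hsupp : ∀ x ∉ A, d x = 0) (hsum : ∑ x, d x = 0)
    (hup : ∀ i (U : Finset X), U ⊆ A → (∀ z ∈ A, ∀ y ∈ U, pref i z y → z ∈ U) →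
      0 ≤ ∑ x ∈ U, d x)
    (hcon : ∀ u ∈ A, ∀ v ∈ A, d u ≠ 0 → d v ≠ 0 → u ≠ v →
      (∃ i, strictPref (pref i) u v) ∧ (∃ i, strictPref (pref i) v u))
    (x0 : X) (hx0A : x0 ∈ A) (hx0 : d x0 ≠ 0)
    (hP2 : (A.filter (fun x => 0 < d x)).card ≤ 2) : False := by
  classical
  set P := A.filter (fun x => 0 < d x) with hPdef
  set Nn := A.filter (fun x => d x < 0) with hNdef
  -- nonemptiness
  have hPne : P.Nonempty := by
    rw [Finset.nonempty_iff_ne_empty]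
    intro hP
    have hall : ∀ x ∈ Finset.univ, d x ≤ 0 := by
      intro x _
      by_cases hxA : x ∈ A
      · by_contra hpos
        push_neg at hpos
        have : x ∈ P := mem_filter.2 ⟨hxA, hpos⟩
        rw [hP] at this; exact absurd this (Finset.notMem_empty x)
      · rw [hsupp x hxA]
    have := (Finset.sum_eq_zero_iff_of_nonpos hall).1 hsum x0 (mem_univ x0)
    exact hx0 this
  have hNne : Nn.Nonempty := by
    rw [Finset.nonempty_iff_ne_empty]
    intro hNn
    have hall : ∀ x ∈ Finset.univ, 0 ≤ d x := by
      intro x _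
      by_cases hxA : x ∈ A
      · by_contra hneg
        push_neg at hneg
        have : x ∈ Nn := mem_filter.2 ⟨hxA, hneg⟩
        rw [hNn] at this; exact absurd this (Finset.notMem_empty x)
      · rw [hsupp x hxA]
    have := (Finset.sum_eq_zero_iff_of_nonneg hall).1 hsum x0 (mem_univ x0)
    exact hx0 this
  -- a negative up-set contradicts hup
  have hneg : ∀ (i : N) (U : Finset X), U ⊆ A →
      (∀ z ∈ A, ∀ y ∈ U, pref i z y → z ∈ U) →
      ∀ w ∈ U, d w < 0 → (∀ x ∈ U, d x ≤ 0) → False := by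
    intro i U hUA hUup w hwU hwd hx
    have h0 := hup i U hUA hUup
    have h1 : ∑ x ∈ U, d x = d w + ∑ x ∈ U.erase w, d x :=
      (Finset.add_sum_erase U d hwU).symm
    have h2 : ∑ x ∈ U.erase w, d x ≤ 0 :=
      Finset.sum_nonpos (fun x hxU => hx x (Finset.mem_of_mem_erase hxU))
    linarith
  have hA0 : ∑ x ∈ A, d x = 0 := by
    rw [Finset.sum_subset (Finset.subset_univ A) (fun x _ hx => hsupp x hx)]
    exact hsum
  have hcard : P.card = 1 ∨ P.card = 2 := by
    have := Finset.card_pos.2 hPne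
    omega
  rcases hcard with hc1 | hc2
  · -- |P| = 1
    obtain ⟨a, hPa⟩ := Finset.card_eq_one.1 hc1
    have haP : a ∈ P := hPa ▸ Finset.mem_singleton_self a
    have haA : a ∈ A := (mem_filter.1 haP).1
    have had : 0 < d a := (mem_filter.1 haP).2
    obtain ⟨w, hwNn⟩ := hNne
    have hwA : w ∈ A := (mem_filter.1 hwNn).1
    have hwd : d w < 0 := (mem_filter.1 hwNn).2
    have hwa : w ≠ a := fun h => by rw [h] at hwd; linarith
    obtain ⟨i, hi⟩ := (hcon w hwA a haA (ne_of_lt hwd) (ne_of_gt had) hwa).1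
    refine hneg i (A.filter (fun z => strictPref (pref i) z a)) (Finset.filter_subset _ _)
      ?_ w (mem_filter.2 ⟨hwA, hi⟩) hwd ?_
    · intro z hzA y hyU hzy
      exact mem_filter.2 ⟨hzA, weak_strict_trans (hpref i) hzy (mem_filter.1 hyU).2⟩
    · intro x hxU
      by_contra hpos
      push_neg at hpos
      have hxP : x ∈ P := mem_filter.2 ⟨(mem_filter.1 hxU).1, hpos⟩
      rw [hPa, Finset.mem_singleton] at hxP
      subst hxP
      exact sp_irrefl _ _ (mem_filter.1 hxU).2
  · -- |P| = 2
    obtain ⟨a, b, hab, hPab⟩ := Finset.card_eq_two.1 hc2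
    have haP : a ∈ P := by rw [hPab]; simp
    have hbP : b ∈ P := by rw [hPab]; simp
    have haA : a ∈ A := (mem_filter.1 haP).1
    have had : 0 < d a := (mem_filter.1 haP).2
    have hbA : b ∈ A := (mem_filter.1 hbP).1
    have hbd : 0 < d b := (mem_filter.1 hbP).2
    have hPmem : ∀ x ∈ A, 0 < d x → x = a ∨ x = b := by
      intro x hxA hxd
      have : x ∈ P := mem_filter.2 ⟨hxA, hxd⟩
      rw [hPab] at this
      simpa using this
    -- (1): no negative is strictly above both a and b
    have h1 : ∀ (i : N), ∀ w ∈ Nn, pref i a w ∨ pref i b w := by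
      intro i w hwNn
      by_contra hcon2
      push_neg at hcon2
      have hwa : strictPref (pref i) w a := strict_of_not (hpref i) hcon2.1
      have hwb : strictPref (pref i) w b := strict_of_not (hpref i) hcon2.2
      have hwA : w ∈ A := (mem_filter.1 hwNn).1
      have hwd : d w < 0 := (mem_filter.1 hwNn).2
      refine hneg i (A.filter (fun z => strictPref (pref i) z a ∧ strictPref (pref i) z b))
        (Finset.filter_subset _ _) ?_ w (mem_filter.2 ⟨hwA, hwa, hwb⟩) hwd ?_
      · intro z hzA y hyU hzy
        obtain ⟨hya, hyb⟩ := (mem_filter.1 hyU).2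
        exact mem_filter.2 ⟨hzA, weak_strict_trans (hpref i) hzy hya,
          weak_strict_trans (hpref i) hzy hyb⟩
      · intro x hxU
        by_contra hpos
        push_neg at hpos
        rcases hPmem x (mem_filter.1 hxU).1 hpos with rfl | rfl
        · exact sp_irrefl _ _ (mem_filter.1 hxU).2.1
        · exact sp_irrefl _ _ (mem_filter.1 hxU).2.2
    -- (2)
    have h2 : ∀ (i : N), ∀ w ∈ Nn, strictPref (pref i) w a → strictPref (pref i) b a := by
      intro i w hw hwa
      rcases h1 i w hw with h | h
      · exact absurd h hwa.2
      · exact weak_strict_trans (hpref i) h hwa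
    have h2' : ∀ (i : N), ∀ w ∈ Nn, strictPref (pref i) w b → strictPref (pref i) a b := by
      intro i w hw hwb
      rcases h1 i w hw with h | h
      · exact weak_strict_trans (hpref i) h hwb
      · exact absurd h hwb.2
    -- agent sets
    set A1 := Finset.univ.filter (fun i => strictPref (pref i) a b) with hA1def
    set A2 := Finset.univ.filter (fun i => strictPref (pref i) b a) with hA2def
    have hconab := hcon a haA b hbA (ne_of_gt had) (ne_of_gt hbd) hab
    have hA1ne : A1.Nonempty := by
      obtain ⟨i, hi⟩ := hconab.1
      exact ⟨i, mem_filter.2 ⟨mem_univ i, hi⟩⟩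
    have hA2ne : A2.Nonempty := by
      obtain ⟨i, hi⟩ := hconab.2
      exact ⟨i, mem_filter.2 ⟨mem_univ i, hi⟩⟩
    have hdisj : Disjoint A1 A2 := by
      rw [Finset.disjoint_left]
      intro i hi1 hi2
      exact (mem_filter.1 hi1).2.2 (mem_filter.1 hi2).2.1
    have hsum12 : A1.card + A2.card ≤ 3 := by
      have h1' := Finset.card_union_of_disjoint hdisj
      have h2'' : (A1 ∪ A2).card ≤ Fintype.card N := Finset.card_le_univ _
      omega
    have h12 : A1.card = 1 ∨ A2.card = 1 := by
      have := Finset.card_pos.2 hA1ne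
      have := Finset.card_pos.2 hA2ne
      omega
    rcases h12 with hc | hc
    · -- A1 = {i}: a ≻_i b, and every negative is ≻_i b
      obtain ⟨i, hA1i⟩ := Finset.card_eq_one.1 hc
      have hiA1 : i ∈ A1 := by rw [hA1i]; exact Finset.mem_singleton_self i
      have hiab : strictPref (pref i) a b := (mem_filter.1 hiA1).2
      have key : ∀ w ∈ Nn, strictPref (pref i) w b := by
        intro w hw
        have hwA : w ∈ A := (mem_filter.1 hw).1
        have hwd : d w < 0 := (mem_filter.1 hw).2
        have hwb : w ≠ b := fun h => by rw [h] at hwd; linarith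
        obtain ⟨j, hj⟩ := (hcon w hwA b hbA (ne_of_lt hwd) (ne_of_gt hbd) hwb).1
        have hjA1 : j ∈ A1 := mem_filter.2 ⟨mem_univ j, h2' j w hw hj⟩
        rw [hA1i, Finset.mem_singleton] at hjA1
        rwa [hjA1] at hj
      set U := A.filter (fun z => strictPref (pref i) z b) with hUdef
      have hbU : b ∉ U := fun h => sp_irrefl _ _ (mem_filter.1 h).2
      have hTA : insert b U ⊆ A := Finset.insert_subset hbA (Finset.filter_subset _ _)
      have hT0 : ∑ x ∈ insert b U, d x = 0 := by
        rw [Finset.sum_subset hTA]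
        · exact hA0
        · intro x hxA hxT
          by_contra hdx
          rcases lt_trichotomy (d x) 0 with hlt | heq | hgt
          · have hxNn : x ∈ Nn := mem_filter.2 ⟨hxA, hlt⟩
            exact hxT (Finset.mem_insert_of_mem (mem_filter.2 ⟨hxA, key x hxNn⟩))
          · exact hdx heq
          · rcases hPmem x hxA hgt with rfl | rfl
            · exact hxT (Finset.mem_insert_of_mem (mem_filter.2 ⟨hxA, hiab⟩))
            · exact hxT (Finset.mem_insert_self x U)
      rw [Finset.sum_insert hbU] at hT0
      have hU0 := hup i U (Finset.filter_subset _ _) (by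
        intro z hzA y hyU hzy
        exact mem_filter.2 ⟨hzA, weak_strict_trans (hpref i) hzy (mem_filter.1 hyU).2⟩)
      linarith
    · -- A2 = {i}: b ≻_i a, and every negative is ≻_i a
      obtain ⟨i, hA2i⟩ := Finset.card_eq_one.1 hc
      have hiA2 : i ∈ A2 := by rw [hA2i]; exact Finset.mem_singleton_self i
      have hiba : strictPref (pref i) b a := (mem_filter.1 hiA2).2
      have key : ∀ w ∈ Nn, strictPref (pref i) w a := by
        intro w hw
        have hwA : w ∈ A := (mem_filter.1 hw).1
        have hwd : d w < 0 := (mem_filter.1 hw).2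
        have hwa : w ≠ a := fun h => by rw [h] at hwd; linarith
        obtain ⟨j, hj⟩ := (hcon w hwA a haA (ne_of_lt hwd) (ne_of_gt had) hwa).1
        have hjA2 : j ∈ A2 := mem_filter.2 ⟨mem_univ j, h2 j w hw hj⟩
        rw [hA2i, Finset.mem_singleton] at hjA2
        rwa [hjA2] at hj
      set U := A.filter (fun z => strictPref (pref i) z a) with hUdef
      have haU : a ∉ U := fun h => sp_irrefl _ _ (mem_filter.1 h).2
      have hTA : insert a U ⊆ A := Finset.insert_subset haA (Finset.filter_subset _ _)
      have hT0 : ∑ x ∈ insert a U, d x = 0 := by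
        rw [Finset.sum_subset hTA]
        · exact hA0
        · intro x hxA hxT
          by_contra hdx
          rcases lt_trichotomy (d x) 0 with hlt | heq | hgt
          · have hxNn : x ∈ Nn := mem_filter.2 ⟨hxA, hlt⟩
            exact hxT (Finset.mem_insert_of_mem (mem_filter.2 ⟨hxA, key x hxNn⟩))
          · exact hdx heq
          · rcases hPmem x hxA hgt with rfl | rfl
            · exact hxT (Finset.mem_insert_self x U)
            · exact hxT (Finset.mem_insert_of_mem (mem_filter.2 ⟨hxA, hiba⟩))
      rw [Finset.sum_insert haU] at hT0
      have hU0 := hup i U (Finset.filter_subset _ _) (by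
        intro z hzA y hyU hzy
        exact mem_filter.2 ⟨hzA, weak_strict_trans (hpref i) hzy (mem_filter.1 hyU).2⟩)
      linarith

lemma base_false [Fintype X] [Fintype N]
    (pref : N → X → X → Prop) (hpref : ∀ i, IsPrefOrder (pref i))
    (hN : Fintype.card N = 3) (A : Finset X) (hA5 : A.card ≤ 5) (d : X → ℝ)
    (hsupp : ∀ x ∉ A, d x = 0) (hsum : ∑ x, d x = 0)
    (hup : ∀ i (U : Finset X), U ⊆ A → (∀ z ∈ A, ∀ y ∈ U, pref i z y → z ∈ U) →
      0 ≤ ∑ x ∈ U, d x)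
    (hcon : ∀ u ∈ A, ∀ v ∈ A, d u ≠ 0 → d v ≠ 0 → u ≠ v →
      (∃ i, strictPref (pref i) u v) ∧ (∃ i, strictPref (pref i) v u))
    (x0 : X) (hx0A : x0 ∈ A) (hx0 : d x0 ≠ 0) : False := by
  classical
  have hA0 : ∑ x ∈ A, d x = 0 := by
    rw [Finset.sum_subset (Finset.subset_univ A) (fun x _ hx => hsupp x hx)]
    exact hsum
  set P := A.filter (fun x => 0 < d x) with hPdef
  set Nn := A.filter (fun x => d x < 0) with hNdef
  have hdisj : Disjoint P Nn := by
    rw [Finset.disjoint_left]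
    intro x hx1 hx2
    have := (mem_filter.1 hx1).2
    have := (mem_filter.1 hx2).2
    linarith
  have hPN : P.card + Nn.card ≤ 5 := by
    have h1 := Finset.card_union_of_disjoint hdisj
    have h2 : P ∪ Nn ⊆ A := Finset.union_subset (Finset.filter_subset _ _) (Finset.filter_subset _ _)
    have := Finset.card_le_card h2
    omega
  have hsplit : P.card ≤ 2 ∨ Nn.card ≤ 2 := by omega
  rcases hsplit with h | h
  · exact side_case pref hpref hN A d hsupp hsum hup hcon x0 hx0A hx0 h
  · -- reverse everything
    set pref' : N → X → X → Prop := fun i x y => pref i y x with hpref'def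
    have hpref' : ∀ i, IsPrefOrder (pref' i) := fun i =>
      ⟨fun x y => ((hpref i).1 y x), fun a b c h1 h2 => (hpref i).2 h2 h1⟩
    refine side_case pref' hpref' hN A (fun x => -d x) (fun x hx => by show -d x = 0; rw [hsupp x hx]; ring)
      (by show ∑ x : X, -d x = 0; rw [Finset.sum_neg_distrib, hsum]; ring) ?_ ?_ x0 hx0A (by simpa using hx0) ?_
    · -- hup for the reversed structure: down-sets have nonpositive sums
      intro i U hUA hUup
      have hVup : ∀ z ∈ A, ∀ y ∈ A \ U, pref i z y → z ∈ A \ U := by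
        intro z hzA y hyV hzy
        rcases Finset.mem_sdiff.1 hyV with ⟨hyA, hyU⟩
        refine Finset.mem_sdiff.2 ⟨hzA, fun hzU => hyU ?_⟩
        exact hUup y hyA z hzU hzy
      have h1 := hup i (A \ U) (Finset.sdiff_subset) hVup
      have h2 : ∑ x ∈ A \ U, d x + ∑ x ∈ U, d x = ∑ x ∈ A, d x := Finset.sum_sdiff hUA
      rw [Finset.sum_neg_distrib]
      linarith
    · intro u hu v hv hdu hdv huv
      have h := hcon u hu v hv (by simpa using hdu) (by simpa using hdv) huv
      exact ⟨h.2, h.1⟩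
    · have : A.filter (fun x => 0 < -d x) = Nn := by
        apply Finset.filter_congr
        intro x _
        simp [neg_pos]
      rw [this]
      exact h

lemma core [Fintype X] [Fintype N]
    (pref : N → X → X → Prop) (hpref : ∀ i, IsPrefOrder (pref i))
    (hN : Fintype.card N = 3) (A : Finset X) (hA5 : A.card ≤ 5)
    (hPO : ∀ x ∈ A, ∀ y ∈ A, ¬ ((∀ i, pref i y x) ∧ ∃ j, strictPref (pref j) y x)) :
    ∀ (n : ℕ) (d : X → ℝ), (A.filter (fun x => d x ≠ 0)).card ≤ n →
    (∀ x ∉ A, d x = 0) → (∑ x, d x = 0) →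
    (∀ i (U : Finset X), U ⊆ A → (∀ z ∈ A, ∀ y ∈ U, pref i z y → z ∈ U) →
      0 ≤ ∑ x ∈ U, d x) →
    ∀ i (U : Finset X), U ⊆ A → (∀ z ∈ A, ∀ y ∈ U, pref i z y → z ∈ U) →
      ∑ x ∈ U, d x = 0 := by
  classical
  intro n
  induction n with
  | zero =>
    intro d hcard hsupp _ _ i U hUA _
    have hflt : A.filter (fun x => d x ≠ 0) = ∅ := Finset.card_eq_zero.1 (Nat.le_zero.1 hcard)
    refine Finset.sum_eq_zero (fun x hxU => ?_)
    by_contra hdx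
    have : x ∈ A.filter (fun x => d x ≠ 0) := mem_filter.2 ⟨hUA hxU, hdx⟩
    rw [hflt] at this
    exact absurd this (Finset.notMem_empty x)
  | succ n ih =>
    intro d hcard hsupp hsum hup
    by_cases hpair : ∃ u ∈ A.filter (fun x => d x ≠ 0), ∃ v ∈ A.filter (fun x => d x ≠ 0),
        u ≠ v ∧ ∀ i, pref i u v ∧ pref i v u
    · -- merge the all-indifferent pair
      obtain ⟨u, hu, v, hv, huv, hind⟩ := hpair
      have huA : u ∈ A := (mem_filter.1 hu).1
      have hdu : d u ≠ 0 := (mem_filter.1 hu).2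
      have hvA : v ∈ A := (mem_filter.1 hv).1
      set d2 : X → ℝ := fun w => if w = v then 0 else if w = u then d u + d v else d w with hd2def
      have hgen : ∀ (U : Finset X), u ∈ U → v ∈ U → ∑ x ∈ U, d2 x = ∑ x ∈ U, d x := by
        intro U huU hvU
        have hvU' : v ∈ U.erase u := Finset.mem_erase.2 ⟨fun h => huv h.symm, hvU⟩
        rw [← Finset.add_sum_erase U d2 huU, ← Finset.add_sum_erase U d huU,
          ← Finset.add_sum_erase _ d2 hvU', ← Finset.add_sum_erase _ d hvU']
        have heq : ∑ x ∈ (U.erase u).erase v, d2 x = ∑ x ∈ (U.erase u).erase v, d x := by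
          refine Finset.sum_congr rfl (fun x hx => ?_)
          have hxv : x ≠ v := (Finset.mem_erase.1 hx).1
          have hxu : x ≠ u := (Finset.mem_erase.1 (Finset.mem_of_mem_erase hx)).1
          simp [hd2def, hxv, hxu]
        rw [heq]
        have hd2u : d2 u = d u + d v := by
          simp [hd2def, (by intro h; exact huv h : u ≠ v)]
        have hd2v : d2 v = 0 := by simp [hd2def]
        rw [hd2u, hd2v]
        ring
      have hUeq : ∀ i (U : Finset X), U ⊆ A → (∀ z ∈ A, ∀ y ∈ U, pref i z y → z ∈ U) →
          ∑ x ∈ U, d2 x = ∑ x ∈ U, d x := by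
        intro i U hUA hUup
        by_cases hvU : v ∈ U
        · exact hgen U (hUup u huA v hvU (hind i).1) hvU
        · refine Finset.sum_congr rfl (fun x hxU => ?_)
          have hxv : x ≠ v := fun h => hvU (h ▸ hxU)
          have hxu : x ≠ u := by
            rintro rfl
            exact hvU (hUup v hvA x hxU (hind i).2)
          simp [hd2def, hxv, hxu]
      have hcard2 : (A.filter (fun x => d2 x ≠ 0)).card ≤ n := by
        have hsub : A.filter (fun x => d2 x ≠ 0) ⊆ (A.filter (fun x => d x ≠ 0)).erase v := by
          intro x hx
          obtain ⟨hxA, hxd⟩ := mem_filter.1 hx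
          have hxv : x ≠ v := by
            rintro rfl
            exact hxd (by simp [hd2def])
          refine Finset.mem_erase.2 ⟨hxv, mem_filter.2 ⟨hxA, ?_⟩⟩
          by_cases hxu : x = u
          · subst hxu; exact hdu
          · intro h0
            exact hxd (by simp [hd2def, hxv, hxu, h0])
        have h1 := Finset.card_le_card hsub
        have h2 := Finset.card_erase_of_mem hv
        have h3 := Finset.card_pos.2 ⟨v, hv⟩
        omega
      have hsupp2 : ∀ x ∉ A, d2 x = 0 := by
        intro x hx
        have hxv : x ≠ v := fun h => hx (h ▸ hvA)
        have hxu : x ≠ u := fun h => hx (h ▸ huA)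
        simp only [hd2def, if_neg hxv, if_neg hxu]
        exact hsupp x hx
      have hsum2 : ∑ x, d2 x = 0 := by
        rw [hgen Finset.univ (mem_univ u) (mem_univ v)]
        exact hsum
      have hup2 : ∀ i (U : Finset X), U ⊆ A → (∀ z ∈ A, ∀ y ∈ U, pref i z y → z ∈ U) →
          0 ≤ ∑ x ∈ U, d2 x := by
        intro i U hUA hUup
        rw [hUeq i U hUA hUup]
        exact hup i U hUA hUup
      intro i U hUA hUup
      rw [← hUeq i U hUA hUup]
      exact ih d2 hcard2 hsupp2 hsum2 hup2 i U hUA hUup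
    · -- contested: derive contradiction if sum nonzero
      have hcon : ∀ u ∈ A, ∀ v ∈ A, d u ≠ 0 → d v ≠ 0 → u ≠ v →
          (∃ i, strictPref (pref i) u v) ∧ (∃ i, strictPref (pref i) v u) := by
        intro u hu v hv hdu hdv huv
        have hsome : ∃ i, strictPref (pref i) u v ∨ strictPref (pref i) v u := by
          by_contra hn
          refine hpair ⟨u, mem_filter.2 ⟨hu, hdu⟩, v, mem_filter.2 ⟨hv, hdv⟩, huv, fun i => ?_⟩
          constructor
          · by_contra hiuv
            exact hn ⟨i, Or.inr (strict_of_not (hpref i) hiuv)⟩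
          · by_contra hivu
            exact hn ⟨i, Or.inl (strict_of_not (hpref i) hivu)⟩
        constructor
        · by_contra hno
          have hall : ∀ i, pref i v u := by
            intro i
            by_contra hnvu
            exact hno ⟨i, ((hpref i).1 u v).resolve_right hnvu, hnvu⟩
          have hstr : ∃ i, strictPref (pref i) v u := by
            obtain ⟨i, hi | hi⟩ := hsome
            · exact absurd ⟨i, hi⟩ hno
            · exact ⟨i, hi⟩
          exact hPO u hu v hv ⟨hall, hstr⟩
        · by_contra hno
          have hall : ∀ i, pref i u v := by
            intro i
            by_contra hnuv
            exact hno ⟨i, ((hpref i).1 v u).resolve_right hnuv, hnuv⟩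
          have hstr : ∃ i, strictPref (pref i) u v := by
            obtain ⟨i, hi | hi⟩ := hsome
            · exact ⟨i, hi⟩
            · exact absurd ⟨i, hi⟩ hno
          exact hPO v hv u hu ⟨hall, hstr⟩
      intro i U hUA hUup
      by_contra hne
      have hx0 : ∃ x ∈ U, d x ≠ 0 := by
        by_contra hall
        push_neg at hall
        exact hne (Finset.sum_eq_zero hall)
      obtain ⟨x0, hx0U, hx0d⟩ := hx0
      exact base_false pref hpref hN A hA5 d hsupp hsum hup hcon x0 (hUA hx0U) hx0d

lemma exists_PO_dominator [Fintype X] (pref : N → X → X → Prop)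
    (hpref : ∀ i, IsPrefOrder (pref i)) :
    ∀ (n : ℕ) (y : X), (Finset.univ.filter (fun z => Dominates pref z y)).card ≤ n →
    ¬ ParetoOptimal pref y → ∃ z, ParetoOptimal pref z ∧ Dominates pref z y := by
  classical
  intro n
  induction n with
  | zero =>
    intro y hcard hy
    obtain ⟨z, hz⟩ := not_not.1 hy
    exfalso
    have : z ∈ Finset.univ.filter (fun z => Dominates pref z y) :=
      mem_filter.2 ⟨mem_univ z, hz⟩
    have := Finset.card_pos.2 ⟨z, this⟩
    omega
  | succ n ih =>
    intro y hcard hy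
    obtain ⟨z, hz⟩ := not_not.1 hy
    by_cases hzPO : ParetoOptimal pref z
    · exact ⟨z, hzPO, hz⟩
    · have hsub : Finset.univ.filter (fun w => Dominates pref w z) ⊆
          Finset.univ.filter (fun w => Dominates pref w y) := by
        intro w hw
        exact mem_filter.2 ⟨mem_univ w, dom_trans hpref (mem_filter.1 hw).2 hz⟩
      have hss : Finset.univ.filter (fun w => Dominates pref w z) ⊂
          Finset.univ.filter (fun w => Dominates pref w y) := by
        refine ⟨hsub, fun hcontra => ?_⟩
        exact dom_irrefl z (mem_filter.1 (hcontra (mem_filter.2 ⟨mem_univ z, hz⟩))).2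
      have hlt := Finset.card_lt_card hss
      obtain ⟨z', hz'PO, hz'z⟩ := ih z (by omega) hzPO
      exact ⟨z', hz'PO, dom_trans hpref hz'z hz⟩

end SD10

/-- With exactly 3 agents and at most 5 Pareto optimal outcomes, every
ex-post efficient lottery is ex-ante efficient. -/
theorem stmt_10 {X N : Type*} [Fintype X] [Nonempty X] [Fintype N] [Nonempty N]
    (pref : N → X → X → Prop) (hpref : ∀ i, IsPrefOrder (pref i))
    (hN : Fintype.card N = 3)
    (hcard : (Finset.univ.filter (fun x => ParetoOptimal pref x)).card ≤ 5)
    (p : X → ℝ) (hp : IsLottery p) (hpost : ExPostEff pref p) :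
    ExAnteEff pref p := by
  classical
  open Finset SD10 in
  rintro ⟨q, hq, hge, j, hgej, x1, hx1⟩
  set A := Finset.univ.filter (fun x => ParetoOptimal pref x) with hAdef
  set d : X → ℝ := fun y => q y - p y with hddef
  have hdval : ∀ y, d y = q y - p y := fun y => rfl
  have hdsum : ∑ x, d x = 0 := by
    rw [show (∑ x, d x) = ∑ x, (q x - p x) from Finset.sum_congr rfl (fun y _ => hdval y),
      Finset.sum_sub_distrib, hq.2, hp.2]
    ring
  have hdiff : ∀ (i : N) (x : X),
      ∑ y ∈ Finset.univ.filter (fun y => strictPref (pref i) y x), d y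
        = upWeight (pref i) q x - upWeight (pref i) p x := by
    intro i x
    rw [show (∑ y ∈ Finset.univ.filter (fun y => strictPref (pref i) y x), d y)
        = ∑ y ∈ Finset.univ.filter (fun y => strictPref (pref i) y x), (q y - p y)
        from Finset.sum_congr rfl (fun y _ => hdval y), Finset.sum_sub_distrib]
    rfl
  have hcum : ∀ (i : N) (x : X),
      0 ≤ ∑ y ∈ Finset.univ.filter (fun y => strictPref (pref i) y x), d y := by
    intro i x
    rw [hdiff]
    have := hge i x
    linarith
  -- the dominator map
  have hdom : ∀ y, ¬ ParetoOptimal pref y →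
      ∃ z, ParetoOptimal pref z ∧ SD10.Dominates pref z y := fun y hy =>
    SD10.exists_PO_dominator pref hpref _ y le_rfl hy
  set t : X → X := fun y =>
    if h : ParetoOptimal pref y then y else Classical.choose (hdom y h) with htdef
  have htPO : ∀ y, ParetoOptimal pref (t y) := by
    intro y
    by_cases h : ParetoOptimal pref y
    · simp only [htdef, dif_pos h]; exact h
    · simp only [htdef, dif_neg h]; exact (Classical.choose_spec (hdom y h)).1
  have htpref : ∀ y (i : N), pref i (t y) y := by
    intro y i
    by_cases h : ParetoOptimal pref y
    · simp only [htdef, dif_pos h]; exact SD10.pref_refl (hpref i) y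
    · simp only [htdef, dif_neg h]; exact (Classical.choose_spec (hdom y h)).2.1 i
  have hteq : ∀ y, ParetoOptimal pref y → t y = y := by
    intro y h; simp only [htdef, dif_pos h]
  have hdnn : ∀ y, ¬ ParetoOptimal pref y → 0 ≤ d y := by
    intro y hy
    have hp0 : p y = 0 := by
      rcases (hp.1 y).lt_or_eq with hlt | heq
      · exact absurd (hpost y hlt) hy
      · exact heq.symm
    rw [hdval, hp0]
    have := hq.1 y
    linarith
  -- the pushed-forward deviation
  set d2 : X → ℝ := fun x => ∑ y ∈ Finset.univ.filter (fun y => t y = x), d y with hd2def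
  have hfib : ∀ (s : Finset X), ∑ x ∈ s, d2 x
      = ∑ y ∈ Finset.univ.filter (fun y => t y ∈ s), d y := by
    intro s
    exact Finset.sum_fiberwise_eq_sum_filter Finset.univ s t d
  have hsum2 : ∑ x, d2 x = 0 := by
    rw [hfib Finset.univ]
    rw [Finset.filter_true_of_mem (fun y _ => Finset.mem_univ (t y))]
    exact hdsum
  have hsupp2 : ∀ x ∉ A, d2 x = 0 := by
    intro x hx
    have hempty : Finset.univ.filter (fun y => t y = x) = ∅ := by
      refine Finset.filter_eq_empty_iff.2 (fun y _ => ?_)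
      intro h
      exact hx (by rw [hAdef]; exact Finset.mem_filter.2 ⟨Finset.mem_univ x, h ▸ htPO y⟩)
    simp only [hd2def, hempty, Finset.sum_empty]
  have hcum2 : ∀ (i : N) (x : X),
      0 ≤ ∑ y' ∈ Finset.univ.filter (fun y' => strictPref (pref i) y' x), d2 y' ∧
      ∑ y ∈ Finset.univ.filter (fun y => strictPref (pref i) y x), d y
        ≤ ∑ y' ∈ Finset.univ.filter (fun y' => strictPref (pref i) y' x), d2 y' := by
    intro i x
    have hset : Finset.univ.filter
        (fun y => t y ∈ Finset.univ.filter (fun y' => strictPref (pref i) y' x))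
        = Finset.univ.filter (fun y => strictPref (pref i) (t y) x) := by
      refine Finset.filter_congr (fun y _ => ?_)
      simp [Finset.mem_filter]
    have hkey : ∑ y ∈ Finset.univ.filter (fun y => strictPref (pref i) y x), d y
        ≤ ∑ y' ∈ Finset.univ.filter (fun y' => strictPref (pref i) y' x), d2 y' := by
      rw [hfib, hset]
      refine Finset.sum_le_sum_of_subset_of_nonneg ?_ ?_
      · intro y hy
        have hyx := (Finset.mem_filter.1 hy).2
        exact Finset.mem_filter.2 ⟨Finset.mem_univ y,
          SD10.weak_strict_trans (hpref i) (htpref y i) hyx⟩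
      · intro y hy hyn
        have hty : strictPref (pref i) (t y) x := (Finset.mem_filter.1 hy).2
        have hyx : ¬ strictPref (pref i) y x := fun h =>
          hyn (Finset.mem_filter.2 ⟨Finset.mem_univ y, h⟩)
        by_cases hPOy : ParetoOptimal pref y
        · exact absurd (by rwa [hteq y hPOy] at hty) hyx
        · exact hdnn y hPOy
    exact ⟨le_trans (hcum i x) hkey, hkey⟩
  have hup2 : ∀ (i : N) (U : Finset X), U ⊆ A → (∀ z ∈ A, ∀ y ∈ U, pref i z y → z ∈ U) →
      0 ≤ ∑ x ∈ U, d2 x := by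
    intro i U hUA hUup
    by_cases hAU : A ⊆ U
    · have hUeq : U = A := Finset.Subset.antisymm hUA hAU
      have hAuniv : ∑ x ∈ A, d2 x = ∑ x, d2 x :=
        Finset.sum_subset (Finset.subset_univ A) (fun x _ hx => hsupp2 x hx)
      rw [hUeq, hAuniv, hsum2]
    · have hne : (A \ U).Nonempty := by
        rw [Finset.sdiff_nonempty]; exact hAU
      obtain ⟨x, hxAU, hx⟩ := SD10.exists_top (hpref i) (A \ U) hne
      have hxA : x ∈ A := (Finset.mem_sdiff.1 hxAU).1
      have hxU : x ∉ U := (Finset.mem_sdiff.1 hxAU).2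
      have hUeq : U = A.filter (fun z => strictPref (pref i) z x) := by
        apply Finset.Subset.antisymm
        · intro u huU
          refine Finset.mem_filter.2 ⟨hUA huU, ?_⟩
          exact SD10.strict_of_not (hpref i) (fun h => hxU (hUup x hxA u huU h))
        · intro z hz
          obtain ⟨hzA, hzx⟩ := Finset.mem_filter.1 hz
          by_contra hzU
          exact hzx.2 (hx z (Finset.mem_sdiff.2 ⟨hzA, hzU⟩))
      have hext : ∑ x' ∈ A.filter (fun z => strictPref (pref i) z x), d2 x'
          = ∑ x' ∈ Finset.univ.filter (fun z => strictPref (pref i) z x), d2 x' := by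
        refine Finset.sum_subset ?_ ?_
        · intro z hz
          exact Finset.mem_filter.2 ⟨Finset.mem_univ z, (Finset.mem_filter.1 hz).2⟩
        · intro z hz hz2
          exact hsupp2 z (fun hzA => hz2 (Finset.mem_filter.2 ⟨hzA, (Finset.mem_filter.1 hz).2⟩))
      rw [hUeq, hext]
      exact (hcum2 i x).1
  have hPOA : ∀ x ∈ A, ∀ y ∈ A, ¬ ((∀ i, pref i y x) ∧ ∃ j', strictPref (pref j') y x) := by
    intro x hx y _ h
    exact (Finset.mem_filter.1 hx).2 ⟨y, h⟩
  have hA5 : A.card ≤ 5 := hcard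
  have hU0up : ∀ z ∈ A, ∀ y ∈ A.filter (fun z => strictPref (pref j) z x1), pref j z y →
      z ∈ A.filter (fun z => strictPref (pref j) z x1) := by
    intro z hzA y hyU hzy
    exact Finset.mem_filter.2
      ⟨hzA, SD10.weak_strict_trans (hpref j) hzy (Finset.mem_filter.1 hyU).2⟩
  have h0 := SD10.core pref hpref hN A hA5 hPOA (A.filter (fun x => d2 x ≠ 0)).card d2 le_rfl
    hsupp2 hsum2 hup2 j (A.filter (fun z => strictPref (pref j) z x1))
    (Finset.filter_subset _ _) hU0up
  have hext0 : ∑ x' ∈ A.filter (fun z => strictPref (pref j) z x1), d2 x'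
      = ∑ x' ∈ Finset.univ.filter (fun z => strictPref (pref j) z x1), d2 x' := by
    refine Finset.sum_subset ?_ ?_
    · intro z hz
      exact Finset.mem_filter.2 ⟨Finset.mem_univ z, (Finset.mem_filter.1 hz).2⟩
    · intro z hz hz2
      exact hsupp2 z (fun hzA => hz2 (Finset.mem_filter.2 ⟨hzA, (Finset.mem_filter.1 hz).2⟩))
  rw [hext0] at h0
  have h1 := (hcum2 j x1).2
  have h2 := hdiff j x1
  linarith
end

section
/- Suppose every outcome in X is Pareto optimal for the profile (≿_i)_{i∈N}, and let (≿'_i)_{i∈N} be the reversed profile defined by x ≿'_i y ⟺ y ≿_i x for all i, x, y. Then the set of ex-ante efficient lotteries differs from the set of ex-post efficient lotteries for (≿_i)_{i∈N} if and only if it does for (≿'_i)_{i∈N}. -/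
attribute [local instance] Classical.propDecidable

/-!
Since every outcome is Pareto optimal for both profiles, every lottery is ex-post efficient, so
the claim is that some lottery is SD-dominated for the profile iff some lottery is SD-dominated
for the reversed one. For a total preorder, `p` SD-dominates `q` iff `p` gives at least as much
mass as `q` to every upper contour set; the upper contour sets of the reversed preference are the
complements of those of the original, and lotteries have equal total mass, so `q` dominates `p`
for a profile exactly when `p` dominates `q` for the reversed profile.
-/

section Reversal

open Finset

variable {X N : Type*}

namespace IsPrefOrder

variable {r : X → X → Prop}

lemma refl (h : IsPrefOrder r) (x : X) : r x x := (h.1 x x).elim id id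

lemma reverse (h : IsPrefOrder r) : IsPrefOrder (fun x y => r y x) :=
  ⟨fun x y => h.1 y x, fun _ _ _ hxy hyz => h.2 hyz hxy⟩

lemma exists_greatest (h : IsPrefOrder r) {s : Finset X} (hs : s.Nonempty) :
    ∃ z ∈ s, ∀ y ∈ s, r z y := by
  induction hs using Finset.Nonempty.cons_induction with
  | singleton a => exact ⟨a, mem_singleton_self a, fun y hy => mem_singleton.1 hy ▸ h.refl a⟩
  | cons a s _ _ ih =>
    obtain ⟨z, hz, hzs⟩ := ih
    rcases h.1 a z with haz | hza
    · exact ⟨a, mem_cons_self a s, by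
        simpa [forall_mem_cons, h.refl a] using fun y hy => h.2 haz (hzs y hy)⟩
    · exact ⟨z, mem_cons_of_mem hz, by simpa [forall_mem_cons, hza] using hzs⟩

end IsPrefOrder

def IsUpClosed (r : X → X → Prop) (U : Finset X) : Prop :=
  ∀ ⦃x y⦄, x ∈ U → r y x → y ∈ U

section UpClosed

variable [Fintype X] {r : X → X → Prop}

lemma isUpClosed_reverse_compl_iff {U : Finset X} :
    IsUpClosed (fun x y => r y x) Uᶜ ↔ IsUpClosed r U := by
  simp only [IsUpClosed, mem_compl]
  exact ⟨fun h x y hx hyx => by_contra fun hy => h hy hyx hx,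
    fun h x y hx hxy hy => hx (h hy hxy)⟩

lemma isUpClosed_filter_strictPref (h : IsPrefOrder r) (x : X) :
    IsUpClosed r (univ.filter fun y => strictPref r y x) := by
  simp only [IsUpClosed, mem_filter, mem_univ, true_and]
  exact fun y z ⟨hyx, hxy⟩ hzy => ⟨h.2 hzy hyx, fun hxz => hxy (h.2 hxz hzy)⟩

/-- In a total preorder, a proper upper contour set consists of the outcomes strictly better than
a best outcome outside it. -/
lemma IsUpClosed.eq_univ_or_eq_filter_strictPref (h : IsPrefOrder r) {U : Finset X}
    (hU : IsUpClosed r U) : U = univ ∨ ∃ z, U = univ.filter fun y => strictPref r y z := by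
  refine or_iff_not_imp_left.2 fun hne => ?_
  obtain ⟨z, hz, hzbest⟩ := h.exists_greatest
    (nonempty_iff_ne_empty.2 ((compl_eq_empty_iff U).not.2 hne))
  rw [mem_compl] at hz
  refine ⟨z, ext fun y => ?_⟩
  simp only [mem_filter, mem_univ, true_and]
  refine ⟨fun hy => ?_, fun ⟨_, hzy⟩ => by_contra fun hy => hzy (hzbest y (mem_compl.2 hy))⟩
  have hzy : ¬ r z y := fun hzy => hz (hU hy hzy)
  exact ⟨(h.1 y z).resolve_right hzy, hzy⟩

variable {p q : X → ℝ}

lemma sdge_iff_forall_isUpClosed (h : IsPrefOrder r) (hpq : ∑ x, p x = ∑ x, q x) :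
    SDge r p q ↔ ∀ U, IsUpClosed r U → ∑ x ∈ U, q x ≤ ∑ x ∈ U, p x := by
  refine ⟨fun hge U hU => ?_, fun hU x => hU _ (isUpClosed_filter_strictPref h x)⟩
  rcases hU.eq_univ_or_eq_filter_strictPref h with rfl | ⟨z, rfl⟩
  · exact hpq.ge
  · exact hge z

lemma exists_upWeight_lt_iff (h : IsPrefOrder r) (hpq : ∑ x, p x = ∑ x, q x) :
    (∃ x, upWeight r q x < upWeight r p x) ↔
      ∃ U, IsUpClosed r U ∧ ∑ x ∈ U, q x < ∑ x ∈ U, p x := by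
  refine ⟨fun ⟨x, hx⟩ => ⟨_, isUpClosed_filter_strictPref h x, hx⟩, fun ⟨U, hU, hlt⟩ => ?_⟩
  rcases hU.eq_univ_or_eq_filter_strictPref h with rfl | ⟨z, rfl⟩
  · exact absurd hpq hlt.ne'
  · exact ⟨z, hlt⟩

lemma sdge_reverse_iff (h : IsPrefOrder r) (hpq : ∑ x, p x = ∑ x, q x) :
    SDge (fun x y => r y x) p q ↔ SDge r q p := by
  rw [sdge_iff_forall_isUpClosed h.reverse hpq, sdge_iff_forall_isUpClosed h hpq.symm,
    compl_involutive.surjective.forall]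
  refine forall_congr' fun U => ?_
  rw [isUpClosed_reverse_compl_iff]
  have hp := sum_compl_add_sum U p
  have hq := sum_compl_add_sum U q
  constructor <;> intro hle hU <;> linarith [hle hU]

lemma sdgt_reverse_iff (h : IsPrefOrder r) (hpq : ∑ x, p x = ∑ x, q x) :
    SDgt (fun x y => r y x) p q ↔ SDgt r q p := by
  refine and_congr (sdge_reverse_iff h hpq) ?_
  rw [exists_upWeight_lt_iff h.reverse hpq, exists_upWeight_lt_iff h hpq.symm,
    compl_involutive.surjective.exists]
  refine exists_congr fun U => ?_
  rw [isUpClosed_reverse_compl_iff]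
  have hp := sum_compl_add_sum U p
  have hq := sum_compl_add_sum U q
  exact and_congr_right fun _ => by constructor <;> intro <;> linarith

end UpClosed

lemma paretoOptimal_reverse {pref : N → X → X → Prop} (hall : ∀ x, ParetoOptimal pref x)
    (x : X) : ParetoOptimal (fun i x y => pref i y x) x :=
  fun ⟨y, hyx, j, hj⟩ => hall y ⟨x, hyx, j, hj⟩

section Efficiency

variable [Fintype X] {pref : N → X → X → Prop}

lemma setOf_exAnteEff_ne_setOf_exPostEff_iff (hall : ∀ x, ParetoOptimal pref x) :
    {p : X → ℝ | IsLottery p ∧ ExAnteEff pref p} ≠ {p | IsLottery p ∧ ExPostEff pref p} ↔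
      ∃ p, IsLottery p ∧ ¬ ExAnteEff pref p := by
  have hpost : {p : X → ℝ | IsLottery p ∧ ExPostEff pref p} = {p | IsLottery p} :=
    Set.ext fun p => and_iff_left fun x _ => hall x
  rw [hpost, Ne, Set.ext_iff]
  simp only [Set.mem_ofPred_eq, and_iff_left_iff_imp, not_forall, exists_prop]

lemma dominates_reverse_iff (hpref : ∀ i, IsPrefOrder (pref i)) {p q : X → ℝ}
    (hp : IsLottery p) (hq : IsLottery q) :
    ((∀ i, SDge (fun x y => pref i y x) q p) ∧ ∃ j, SDgt (fun x y => pref j y x) q p) ↔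
      (∀ i, SDge (pref i) p q) ∧ ∃ j, SDgt (pref j) p q := by
  have hqp : ∑ x, q x = ∑ x, p x := hq.2.trans hp.2.symm
  exact and_congr (forall_congr' fun i => sdge_reverse_iff (hpref i) hqp)
    (exists_congr fun j => sdgt_reverse_iff (hpref j) hqp)

lemma exists_not_exAnteEff_reverse_iff (hpref : ∀ i, IsPrefOrder (pref i)) :
    (∃ p : X → ℝ, IsLottery p ∧ ¬ ExAnteEff (fun i x y => pref i y x) p) ↔
      ∃ p : X → ℝ, IsLottery p ∧ ¬ ExAnteEff pref p := by
  simp only [ExAnteEff, not_not]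
  constructor
  · rintro ⟨p, hp, q, hq, hdom⟩
    exact ⟨q, hq, p, hp, (dominates_reverse_iff hpref hp hq).1 hdom⟩
  · rintro ⟨p, hp, q, hq, hdom⟩
    exact ⟨q, hq, p, hp, (dominates_reverse_iff hpref hq hp).2 hdom⟩

end Efficiency

end Reversal

theorem stmt_11_general {X N : Type*} [Fintype X]
    (pref : N → X → X → Prop) (hpref : ∀ i, IsPrefOrder (pref i))
    (hall : ∀ x : X, ParetoOptimal pref x) :
    ({p : X → ℝ | IsLottery p ∧ ExAnteEff pref p} ≠
        {p : X → ℝ | IsLottery p ∧ ExPostEff pref p}) ↔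
      ({p : X → ℝ | IsLottery p ∧ ExAnteEff (fun i x y => pref i y x) p} ≠
        {p : X → ℝ | IsLottery p ∧ ExPostEff (fun i x y => pref i y x) p}) := by
  rw [setOf_exAnteEff_ne_setOf_exPostEff_iff hall,
    setOf_exAnteEff_ne_setOf_exPostEff_iff (paretoOptimal_reverse hall)]
  exact (exists_not_exAnteEff_reverse_iff hpref).symm

/-- If all outcomes are Pareto optimal, ex-ante efficiency differs from
ex-post efficiency for a profile iff it differs for the reversed profile. -/
theorem stmt_11 {X N : Type*} [Fintype X] [Nonempty X] [Fintype N] [Nonempty N]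
    (pref : N → X → X → Prop) (hpref : ∀ i, IsPrefOrder (pref i))
    (hall : ∀ x : X, ParetoOptimal pref x) :
    ({p : X → ℝ | IsLottery p ∧ ExAnteEff pref p} ≠
        {p : X → ℝ | IsLottery p ∧ ExPostEff pref p}) ↔
      ({p : X → ℝ | IsLottery p ∧ ExAnteEff (fun i x y => pref i y x) p} ≠
        {p : X → ℝ | IsLottery p ∧ ExPostEff (fun i x y => pref i y x) p}) :=
  stmt_11_general pref hpref hall
end

section
/- For any profile of dichotomous preferences with at most 4 agents (|N| ≤ 4), every ex-post efficient lottery is ex-ante efficient. -/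
attribute [local instance] Classical.propDecidable

/-- A preference is dichotomous with set `A` of acceptable outcomes. -/
def Dichotomous {X : Type*} (r : X → X → Prop) (A : Set X) : Prop :=
  ∀ x y, r x y ↔ (x ∈ A ∨ y ∉ A)


lemma exists_weight_aux {N : Type*} [DecidableEq N] (n : ℕ) :
    ∀ (U : Finset N), U.card ≤ n → U.card ≤ 4 →
    ∀ (𝒜 : Finset (Finset N)), (∀ T ∈ 𝒜, T ⊆ U) → (∀ T ∈ 𝒜, T.Nonempty) →
    (∀ T ∈ 𝒜, ∀ T' ∈ 𝒜, T ⊆ T' → T = T') →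
    ∃ (lam : N → ℝ) (c : ℝ), (∀ i, 0 < lam i) ∧ 0 < c ∧ ∀ T ∈ 𝒜, ∑ i ∈ T, lam i = c := by
  induction n with
  | zero =>
    intro U hUn _ 𝒜 hsub hne _
    refine ⟨fun _ => 1, 1, fun _ => one_pos, one_pos, ?_⟩
    intro T hT
    exfalso
    have hU : U = ∅ := Finset.card_eq_zero.mp (Nat.le_zero.mp hUn)
    have := hne T hT
    have h2 := hsub T hT
    rw [hU, Finset.subset_empty] at h2
    rw [h2] at this
    exact Finset.not_nonempty_empty this
  | succ n ih =>
    intro U hUn hU4 𝒜 hsub hne hanti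
    rcases 𝒜.eq_empty_or_nonempty with hAe | ⟨T₀, hT₀⟩
    · exact ⟨fun _ => 1, 1, fun _ => one_pos, one_pos, by simp [hAe]⟩
    by_cases hsing : ∃ T ∈ 𝒜, T.card = 1
    · -- singleton case: recurse
      obtain ⟨T1, hT1, hT1c⟩ := hsing
      obtain ⟨i, rfl⟩ := Finset.card_eq_one.mp hT1c
      have hiU : i ∈ U := Finset.singleton_subset_iff.mp (hsub _ hT1)
      have hnotin : ∀ T' ∈ 𝒜.erase {i}, i ∉ T' := by
        intro T' hT' hiT'
        have h1 : ({i} : Finset N) ⊆ T' := Finset.singleton_subset_iff.mpr hiT'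
        have := hanti _ hT1 _ (Finset.mem_of_mem_erase hT') h1
        exact (Finset.ne_of_mem_erase hT') this.symm
      obtain ⟨μ, c', hμ, hc', hconst⟩ :=
        ih (U.erase i) (by rw [Finset.card_erase_of_mem hiU]; omega)
          (le_trans (Finset.card_le_card (Finset.erase_subset _ _)) hU4)
          (𝒜.erase {i})
          (fun T hT => Finset.subset_erase.mpr
            ⟨hsub T (Finset.mem_of_mem_erase hT), hnotin T hT⟩)
          (fun T hT => hne T (Finset.mem_of_mem_erase hT))
          (fun T hT T' hT' h => hanti T (Finset.mem_of_mem_erase hT) T'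
            (Finset.mem_of_mem_erase hT') h)
      refine ⟨fun j => if j = i then c' else μ j, c', ?_, hc', ?_⟩
      · intro j; by_cases h : j = i <;> simp [h, hc', hμ j]
      · intro T hT
        by_cases hTi : T = {i}
        · simp [hTi]
        · have hT' : T ∈ 𝒜.erase {i} := Finset.mem_erase.mpr ⟨hTi, hT⟩
          have : ∑ j ∈ T, (if j = i then c' else μ j) = ∑ j ∈ T, μ j := by
            apply Finset.sum_congr rfl
            intro j hj
            have : j ≠ i := fun h => hnotin T hT' (h ▸ hj)
            simp [this]
          rw [this]; exact hconst T hT'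
    · -- all sets have size ≥ 2
      have h2 : ∀ T ∈ 𝒜, 2 ≤ T.card := by
        intro T hT
        have h1 : 1 ≤ T.card := Finset.card_pos.mpr (hne T hT)
        have : T.card ≠ 1 := fun h => hsing ⟨T, hT, h⟩
        omega
      by_cases hsame : ∀ T ∈ 𝒜, T.card = T₀.card
      · refine ⟨fun _ => 1, (T₀.card : ℝ), fun _ => one_pos, ?_, ?_⟩
        · have := h2 T₀ hT₀; positivity
        · intro T hT; simp [hsame T hT]
      · push_neg at hsame
        obtain ⟨T', hT', hT'c⟩ := hsame
        -- get T2 (card 2) and T3 (card 3), sort of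
        obtain ⟨T2, hT2, T3, hT3, hlt⟩ :
            ∃ T2 ∈ 𝒜, ∃ T3 ∈ 𝒜, T2.card < T3.card := by
          rcases Nat.lt_or_ge T'.card T₀.card with h | h
          · exact ⟨T', hT', T₀, hT₀, h⟩
          · exact ⟨T₀, hT₀, T', hT', lt_of_le_of_ne h (fun hh => hT'c hh.symm)⟩
        have hnsub : ¬ T2 ⊆ T3 := by
          intro h
          exact absurd (hanti _ hT2 _ hT3 h) (fun hh => by rw [hh] at hlt; omega)
        obtain ⟨a, haT2, haT3⟩ := Finset.not_subset.mp hnsub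
        have hneq : ∀ T ∈ 𝒜, T.card < U.card := by
          intro T hT
          have hle := Finset.card_le_card (hsub T hT)
          rcases lt_or_eq_of_le hle with h | h
          · exact h
          · exfalso
            have hTU : T = U := Finset.eq_of_subset_of_card_le (hsub T hT) (le_of_eq h.symm)
            -- then T2 ⊆ T and T3 ⊆ T, so T2 = T = T3, contra with cards
            have e2 := hanti _ hT2 _ hT (hTU ▸ hsub T2 hT2)
            have e3 := hanti _ hT3 _ hT (hTU ▸ hsub T3 hT3)
            rw [e2, e3] at hlt; omega
        have hU4' : U.card = 4 := by
          have h3U := hneq T3 hT3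
          have hins : insert a T3 ⊆ U := Finset.insert_subset (hsub T2 hT2 haT2) (hsub T3 hT3)
          have := Finset.card_le_card hins
          rw [Finset.card_insert_of_notMem haT3] at this
          have := h2 T2 hT2
          have := h2 T3 hT3
          omega
        have hT3c : T3.card = 3 := by
          have := hneq T3 hT3; have := h2 T2 hT2; omega
        have hT2c : T2.card = 2 := by have := h2 T2 hT2; omega
        have hcards : ∀ T ∈ 𝒜, T.card = 2 ∨ T.card = 3 := by
          intro T hT
          have := h2 T hT; have := hneq T hT; omega
        set D : Finset N := U.filter (fun d => U.erase d ∈ 𝒜) with hD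
        have htriple : ∀ T ∈ 𝒜, T.card = 3 → ∃ d ∈ D, T = U.erase d := by
          intro T hT hTc
          have hss : T ⊂ U := Finset.ssubset_iff_subset_ne.mpr
            ⟨hsub T hT, fun h => by rw [h] at hTc; omega⟩
          obtain ⟨d, hdU, hdT⟩ := Finset.exists_of_ssubset hss
          have hsub' : T ⊆ U.erase d := Finset.subset_erase.mpr ⟨hsub T hT, hdT⟩
          have hcard' : (U.erase d).card ≤ T.card := by
            rw [Finset.card_erase_of_mem hdU]; omega
          have hTe : T = U.erase d := Finset.eq_of_subset_of_card_le hsub' hcard'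
          exact ⟨d, Finset.mem_filter.mpr ⟨hdU, hTe ▸ hT⟩, hTe⟩
        have hpair : ∀ T ∈ 𝒜, T.card = 2 → D ⊆ T := by
          intro T hT hTc d hdD
          obtain ⟨hdU, hdA⟩ := Finset.mem_filter.mp hdD
          have hnsub' : ¬ T ⊆ U.erase d := by
            intro h
            have := hanti _ hT _ hdA h
            rw [this, Finset.card_erase_of_mem hdU] at hTc; omega
          obtain ⟨b, hbT, hbe⟩ := Finset.not_subset.mp hnsub'
          have hbU : b ∈ U := hsub T hT hbT
          have : b = d := by
            by_contra hbd
            exact hbe (Finset.mem_erase.mpr ⟨hbd, hbU⟩)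
          exact this ▸ hbT
        have hDne : D.Nonempty := by
          obtain ⟨d, hdD, _⟩ := htriple T3 hT3 hT3c
          exact ⟨d, hdD⟩
        have hD2 : D.card ≤ 2 := by
          have := Finset.card_le_card (hpair T2 hT2 hT2c)
          omega
        have hD1 : 1 ≤ D.card := Finset.card_pos.mpr hDne
        refine ⟨fun i => if i ∈ D then (2 : ℝ) else 1, 2 + (D.card : ℝ), ?_, by positivity, ?_⟩
        · intro i; by_cases h : i ∈ D <;> simp [h] <;> norm_num
        · intro T hT
          have hsumT : ∑ i ∈ T, (if i ∈ D then (2:ℝ) else 1)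
              = (T.card : ℝ) + ((T ∩ D).card : ℝ) := by
            have heq : ∀ i, (if i ∈ D then (2:ℝ) else 1) = 1 + (if i ∈ D then 1 else 0) := by
              intro i; by_cases h : i ∈ D <;> simp [h] <;> norm_num
            simp_rw [heq]
            rw [Finset.sum_add_distrib, Finset.sum_const, Finset.sum_boole,
              Finset.filter_mem_eq_inter]
            simp
          have hnat : T.card + (T ∩ D).card = 2 + D.card := by
            rcases hcards T hT with h | h
            · have hTD : T ∩ D = D := Finset.inter_eq_right.mpr (hpair T hT h)
              rw [h, hTD]
            · obtain ⟨d, hdD, rfl⟩ := htriple T hT h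
              have hDU : D ⊆ U := Finset.filter_subset _ _
              have hTD : (U.erase d) ∩ D = D.erase d := by
                ext i
                simp only [Finset.mem_inter, Finset.mem_erase]
                constructor
                · rintro ⟨⟨hid, _⟩, hiD⟩; exact ⟨hid, hiD⟩
                · rintro ⟨hid, hiD⟩; exact ⟨⟨hid, hDU hiD⟩, hiD⟩
              rw [h, hTD, Finset.card_erase_of_mem hdD]
              omega
          rw [hsumT, ← Nat.cast_add, hnat]
          push_cast
          ring

/-- With dichotomous preferences and at most 4 agents, every ex-post efficient
lottery is ex-ante efficient. -/
theorem stmt_12 {X N : Type*} [Fintype X] [Nonempty X] [Fintype N] [Nonempty N]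
    (pref : N → X → X → Prop) (A : N → Set X)
    (hpref : ∀ i, Dichotomous (pref i) (A i))
    (hN : Fintype.card N ≤ 4)
    (p : X → ℝ) (hp : IsLottery p) (hpost : ExPostEff pref p) :
    ExAnteEff pref p := by
  classical
  rintro ⟨q, hq, hge, j, hgt⟩
  -- approval set of an outcome
  set e : X → Finset N := fun x => Finset.univ.filter (fun i => x ∈ A i) with he
  have hmem_e : ∀ x i, i ∈ e x ↔ x ∈ A i := by
    intro x i; simp [he]
  -- strict preference characterization
  have hstrict : ∀ (i : N) (y x : X), strictPref (pref i) y x ↔ (y ∈ A i ∧ x ∉ A i) := by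
    intro i y x
    unfold strictPref
    rw [hpref i y x, hpref i x y]
    tauto
  -- value of a lottery for agent i
  set val : N → (X → ℝ) → ℝ := fun i r => ∑ y ∈ Finset.univ.filter (fun y => y ∈ A i), r y
    with hval
  have hup : ∀ (i : N) (r : X → ℝ) (x : X),
      upWeight (pref i) r x = if x ∈ A i then 0 else val i r := by
    intro i r x
    unfold upWeight
    by_cases h : x ∈ A i
    · rw [if_pos h]
      have hempty : Finset.univ.filter (fun y => strictPref (pref i) y x) = ∅ := by
        rw [Finset.filter_eq_empty_iff]
        intro y _
        rw [hstrict]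
        tauto
      rw [hempty, Finset.sum_empty]
    · rw [if_neg h]
      congr 1
      apply Finset.filter_congr
      intro y _
      rw [hstrict]
      tauto
  -- weak dominance in values
  have hval_ge : ∀ i, val i p ≤ val i q := by
    intro i
    by_cases hA : ∃ x, x ∉ A i
    · obtain ⟨x, hx⟩ := hA
      have := hge i x
      rwa [hup, hup, if_neg hx, if_neg hx] at this
    · push_neg at hA
      have hfil : Finset.univ.filter (fun y => y ∈ A i) = Finset.univ :=
        Finset.filter_true_of_mem (fun x _ => hA x)
      have h1 : val i p = 1 := by rw [hval]; simp only [hfil]; exact hp.2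
      have h2 : val i q = 1 := by rw [hval]; simp only [hfil]; exact hq.2
      rw [h1, h2]
  -- strict dominance for agent j
  have hval_gt : val j p < val j q := by
    obtain ⟨x, hx⟩ := hgt.2
    rw [hup, hup] at hx
    by_cases h : x ∈ A j
    · rw [if_pos h, if_pos h] at hx; exact absurd hx (lt_irrefl (0:ℝ))
    · rwa [if_neg h, if_neg h] at hx
  -- degenerate case: nobody accepts anything
  by_cases hE : ∀ (y : X) (i : N), y ∉ A i
  · have hfe : Finset.univ.filter (fun y => y ∈ A j) = (∅ : Finset X) := by
      rw [Finset.filter_eq_empty_iff]; exact fun y _ => hE y j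
    have h0 : val j p = 0 := by rw [hval]; simp only [hfe]; exact Finset.sum_empty
    have h0' : val j q = 0 := by rw [hval]; simp only [hfe]; exact Finset.sum_empty
    rw [h0, h0'] at hval_gt
    exact absurd hval_gt (lt_irrefl 0)
  push_neg at hE
  obtain ⟨y₀, i₀, hy₀⟩ := hE
  -- the family of maximal approval sets
  set 𝒜 : Finset (Finset N) :=
    (Finset.univ.image e).filter (fun T => ∀ z : X, T ⊆ e z → e z = T) with h𝒜
  have h𝒜ne : ∀ T ∈ 𝒜, T.Nonempty := by
    intro T hT
    rw [Finset.nonempty_iff_ne_empty]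
    rintro rfl
    obtain ⟨_, hmax⟩ := Finset.mem_filter.mp hT
    have h1 : i₀ ∈ e y₀ := (hmem_e _ _).mpr hy₀
    rw [hmax y₀ (Finset.empty_subset _)] at h1
    exact Finset.notMem_empty _ h1
  have h𝒜anti : ∀ T ∈ 𝒜, ∀ T' ∈ 𝒜, T ⊆ T' → T = T' := by
    intro T hT T' hT' hss
    obtain ⟨hT'img, _⟩ := Finset.mem_filter.mp hT'
    obtain ⟨z, _, rfl⟩ := Finset.mem_image.mp hT'img
    exact ((Finset.mem_filter.mp hT).2 z hss).symm
  -- support of p consists of maximal sets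
  have hsupp : ∀ x, 0 < p x → e x ∈ 𝒜 := by
    intro x hx
    refine Finset.mem_filter.mpr ⟨Finset.mem_image.mpr ⟨x, Finset.mem_univ x, rfl⟩, ?_⟩
    intro z hsub
    by_contra hne
    apply hpost x hx
    refine ⟨z, ?_, ?_⟩
    · intro i
      rw [hpref i z x]
      by_cases hxA : x ∈ A i
      · left
        exact (hmem_e z i).mp (hsub ((hmem_e x i).mpr hxA))
      · right; exact hxA
    · have hss : e x ⊂ e z := Finset.ssubset_iff_subset_ne.mpr ⟨hsub, fun h => hne h.symm⟩
      obtain ⟨k, hkz, hkx⟩ := Finset.exists_of_ssubset hss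
      refine ⟨k, (hstrict k z x).mpr ⟨(hmem_e z k).mp hkz, fun h => hkx ((hmem_e x k).mpr h)⟩⟩
  -- get positive weights constant on maximal sets
  obtain ⟨lam, c, hlam, hc, hconst⟩ :=
    exists_weight_aux (Fintype.card N) Finset.univ (le_of_eq (Finset.card_univ)) 
      (le_trans (le_of_eq Finset.card_univ) hN) 𝒜
      (fun T _ => T.subset_univ) h𝒜ne h𝒜anti
  -- every approval set has lam-weight at most c
  have hcover : ∀ x : X, ∑ i ∈ e x, lam i ≤ c := by
    intro x
    set F : Finset (Finset N) := (Finset.univ.image e).filter (fun T => e x ⊆ T) with hF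
    have hxF : e x ∈ F := Finset.mem_filter.mpr
      ⟨Finset.mem_image.mpr ⟨x, Finset.mem_univ x, rfl⟩, Finset.Subset.refl _⟩
    obtain ⟨T, hTF, hTmax⟩ := Finset.exists_max_image F (fun T => T.card) ⟨_, hxF⟩
    obtain ⟨hTimg, hxT⟩ := Finset.mem_filter.mp hTF
    have hT𝒜 : T ∈ 𝒜 := by
      refine Finset.mem_filter.mpr ⟨hTimg, ?_⟩
      intro w hw
      have hwF : e w ∈ F := Finset.mem_filter.mpr
        ⟨Finset.mem_image.mpr ⟨w, Finset.mem_univ w, rfl⟩, hxT.trans hw⟩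
      exact (Finset.eq_of_subset_of_card_le hw (hTmax _ hwF)).symm
    calc ∑ i ∈ e x, lam i ≤ ∑ i ∈ T, lam i :=
          Finset.sum_le_sum_of_subset_of_nonneg hxT (fun i _ _ => le_of_lt (hlam i))
      _ = c := hconst T hT𝒜
  -- exchange sums
  have hexch : ∀ r : X → ℝ, ∑ i, lam i * val i r = ∑ x, r x * ∑ i ∈ e x, lam i := by
    intro r
    have h1 : ∀ i, val i r = ∑ y, if y ∈ A i then r y else 0 := by
      intro i; rw [hval]; exact Finset.sum_filter _ _
    calc ∑ i, lam i * val i r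
        = ∑ i, ∑ y, (if y ∈ A i then lam i * r y else 0) := by
          refine Finset.sum_congr rfl fun i _ => ?_
          rw [h1, Finset.mul_sum]
          refine Finset.sum_congr rfl fun y _ => ?_
          by_cases h : y ∈ A i <;> simp [h]
      _ = ∑ y, ∑ i, (if y ∈ A i then lam i * r y else 0) := Finset.sum_comm
      _ = ∑ x, r x * ∑ i ∈ e x, lam i := by
          refine Finset.sum_congr rfl fun y _ => ?_
          rw [← Finset.sum_filter, ← Finset.sum_mul, mul_comm]
  have hSp : ∑ i, lam i * val i p = c := by
    rw [hexch p]
    have hcg : ∀ x ∈ Finset.univ, p x * ∑ i ∈ e x, lam i = p x * c := by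
      intro x _
      rcases eq_or_lt_of_le (hp.1 x) with h | h
      · rw [← h]; ring
      · rw [hconst _ (hsupp x h)]
    rw [Finset.sum_congr rfl hcg, ← Finset.sum_mul, hp.2, one_mul]
  have hSq : ∑ i, lam i * val i q ≤ c := by
    rw [hexch q]
    calc ∑ x, q x * ∑ i ∈ e x, lam i ≤ ∑ x, q x * c :=
          Finset.sum_le_sum fun x _ => mul_le_mul_of_nonneg_left (hcover x) (hq.1 x)
      _ = c := by rw [← Finset.sum_mul, hq.2, one_mul]
  have hlt : ∑ i, lam i * val i p < ∑ i, lam i * val i q :=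
    Finset.sum_lt_sum (fun i _ => mul_le_mul_of_nonneg_left (hval_ge i) (le_of_lt (hlam i)))
      ⟨j, Finset.mem_univ j, mul_lt_mul_of_pos_left hval_gt (hlam j)⟩
  linarith
end

section
/- For every n ≥ 5 there exist a finite set X of outcomes with |X| = 4, a set N of n agents, and a profile of dichotomous preferences (≿_i)_{i∈N} on X admitting a lottery that is ex-post efficient but not ex-ante efficient. -/
attribute [local instance] Classical.propDecidable

/-!
Take outcomes `0, 1, 2, 3`, five agents with acceptable sets `{0,2}, {0,3}, {1,2}, {1,3}, {2,3}`,
and any further agents accepting everything. Outcome `0` is the only one acceptable to both of the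
first two agents and `1` the only one acceptable to both of the next two, so both are Pareto
optimal and the uniform lottery on `{0, 1}` is ex-post efficient. Moving all its weight uniformly to
`{2, 3}` leaves each of the first four agents with probability `1/2` of an acceptable outcome and
raises that probability from `0` to `1` for the fifth agent, so it is not ex-ante efficient.
-/

variable {X N : Type*}

lemma strictPref_iff_of_dichotomous {r : X → X → Prop} {A : Set X} (h : Dichotomous r A)
    (x y : X) : strictPref r x y ↔ x ∈ A ∧ y ∉ A := by
  rw [strictPref, h, h]
  tauto

lemma paretoOptimal_of_forall_ne_strictPref {pref : N → X → X → Prop} {x : X}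
    (h : ∀ y ≠ x, ∃ i, strictPref (pref i) x y) : ParetoOptimal pref x := by
  rintro ⟨y, hy_ge, j, hj⟩
  rcases eq_or_ne y x with rfl | hne
  · exact hj.2 hj.1
  · obtain ⟨i, hi⟩ := h y hne
    exact hi.2 (hy_ge i)

noncomputable def mass [Fintype X] (p : X → ℝ) (A : Set X) : ℝ :=
  ∑ y ∈ Finset.univ.filter (· ∈ A), p y

lemma exPostEff_of_dichotomous [Fintype X] {pref : N → X → X → Prop} {A : N → Set X}
    (hA : ∀ i, Dichotomous (pref i) (A i)) {p : X → ℝ}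
    (h : ∀ x, 0 < p x → ∀ y ≠ x, ∃ i, x ∈ A i ∧ y ∉ A i) : ExPostEff pref p :=
  fun x hx => paretoOptimal_of_forall_ne_strictPref fun y hy =>
    (h x hx y hy).imp fun i => (strictPref_iff_of_dichotomous (hA i) x y).2

lemma upWeight_of_dichotomous [Fintype X] {r : X → X → Prop} {A : Set X} (h : Dichotomous r A)
    (p : X → ℝ) (x : X) : upWeight r p x = if x ∈ A then 0 else mass p A := by
  unfold upWeight mass
  split_ifs with hx <;> simp [strictPref_iff_of_dichotomous h, hx]

lemma not_exAnteEff_of_dichotomous [Fintype X] {pref : N → X → X → Prop} {A : N → Set X}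
    (hA : ∀ i, Dichotomous (pref i) (A i)) {p q : X → ℝ} (hq : IsLottery q)
    (hle : ∀ i, mass p (A i) ≤ mass q (A i)) {j : N} {x : X} (hx : x ∉ A j)
    (hlt : mass p (A j) < mass q (A j)) : ¬ ExAnteEff pref p := by
  have hge : ∀ i, SDge (pref i) q p := fun i y => by
    simp only [upWeight_of_dichotomous (hA i)]
    split_ifs
    exacts [le_rfl, hle i]
  refine not_not.mpr ⟨q, hq, hge, j, hge j, x, ?_⟩
  simpa only [upWeight_of_dichotomous (hA j), hx, if_false] using hlt

lemma mass_coe [Fintype X] (p : X → ℝ) (s : Finset X) : mass p ↑s = ∑ y ∈ s, p y := by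
  simp only [mass, Finset.mem_coe, Finset.filter_mem_eq_inter, Finset.univ_inter]

def acceptable : ℕ → Finset (Fin 4)
  | 0 => {0, 2}
  | 1 => {0, 3}
  | 2 => {1, 2}
  | 3 => {1, 3}
  | 4 => {2, 3}
  | _ => Finset.univ

noncomputable def lotteryLow : Fin 4 → ℝ := ![1/2, 1/2, 0, 0]

noncomputable def lotteryHigh : Fin 4 → ℝ := ![0, 0, 1/2, 1/2]

lemma isLottery_lotteryLow : IsLottery lotteryLow :=
  ⟨fun x => by fin_cases x <;> norm_num [lotteryLow],
    by simp [lotteryLow, Fin.sum_univ_four]; norm_num⟩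

lemma isLottery_lotteryHigh : IsLottery lotteryHigh :=
  ⟨fun x => by fin_cases x <;> norm_num [lotteryHigh],
    by simp [lotteryHigh, Fin.sum_univ_four]; norm_num⟩

lemma mass_lotteryLow_le (k : ℕ) :
    mass lotteryLow ↑(acceptable k) ≤ mass lotteryHigh ↑(acceptable k) := by
  rw [mass_coe, mass_coe]
  match k with
  | 0 | 1 | 2 | 3 | 4 => simp [acceptable, lotteryLow, lotteryHigh]
  | _ + 5 =>
    show ∑ y, _ ≤ ∑ y, _
    rw [isLottery_lotteryLow.2, isLottery_lotteryHigh.2]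

lemma mass_lotteryLow_lt :
    mass lotteryLow ↑(acceptable 4) < mass lotteryHigh ↑(acceptable 4) := by
  rw [mass_coe, mass_coe]
  simp [acceptable, lotteryLow, lotteryHigh]

lemma mem_of_lotteryLow_pos {x : Fin 4} (hx : 0 < lotteryLow x) :
    x ∈ ({0, 1} : Finset (Fin 4)) := by
  fin_cases x <;> simp_all [lotteryLow]

lemma exists_acceptable_not_acceptable :
    ∀ x ∈ ({0, 1} : Finset (Fin 4)), ∀ y ≠ x,
      ∃ k < 4, x ∈ acceptable k ∧ y ∉ acceptable k := by
  decide

/-- For every `n ≥ 5` there is a profile of dichotomous preferences of `n`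
agents over 4 outcomes with a lottery that is ex-post but not ex-ante efficient. -/
theorem stmt_13 (n : ℕ) (hn : 5 ≤ n) :
    ∃ (pref : Fin n → Fin 4 → Fin 4 → Prop) (A : Fin n → Set (Fin 4)),
      (∀ i, Dichotomous (pref i) (A i)) ∧
      ∃ p : Fin 4 → ℝ, IsLottery p ∧ ExPostEff pref p ∧ ¬ ExAnteEff pref p := by
  let A : Fin n → Set (Fin 4) := fun i => ↑(acceptable i)
  have hA : ∀ i, Dichotomous (fun x y => x ∈ A i ∨ y ∉ A i) (A i) := fun _ _ _ => Iff.rfl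
  refine ⟨_, A, hA, lotteryLow, isLottery_lotteryLow, ?_, ?_⟩
  · refine exPostEff_of_dichotomous hA fun x hx y hy => ?_
    obtain ⟨k, hk, hxk, hyk⟩ :=
      exists_acceptable_not_acceptable x (mem_of_lotteryLow_pos hx) y hy
    exact ⟨⟨k, by omega⟩, hxk, hyk⟩
  · exact not_exAnteEff_of_dichotomous hA isLottery_lotteryHigh
      (fun i => mass_lotteryLow_le i) (j := ⟨4, by omega⟩) (x := 0) (by simp [A, acceptable])
      mass_lotteryLow_lt
end
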